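/- arXiv:1301.7196 — 7 statements merged into one kernel-verified Lean document; each statement's English description precedes it below -/
import Mathlib

section
/- For every integer k ≥ 2 and all numbers A, B > 0 (or more generally commuting elements of a ring) and every s with 0 ≤ s ≤ n, the Bergström identity holds: A^n = Σ_{m=0}^{s} C(n,m) B^{n-m}(A-B)^m + Σ_{m=s+1}^{n} C(m-1,s) A^{n-m}(A-B)^{s+1} B^{m-s-1}. -/
/-!
Write `D = A - B` and let `T n s` be the second sum. Peeling off the top index gives
`T (n + 1) s = A * T n s + C(n, s) D^(s+1) B^(n-s)`, and from this recursion in `n`, together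
with `A - D = B` and Pascal's rule, one gets `T n 0 = A^n - B^n` and
`T n s = C(n, s+1) B^(n-s-1) D^(s+1) + T n (s + 1)`. So the identity holds at `s = 0`, and
raising `s` by one moves exactly one binomial term from the tail into the partial sum.
-/

open Finset

section

variable {R : Type*} [CommRing R]

def bergstromTail (A B : R) (n s : ℕ) : R :=
  ∑ m ∈ Icc (s + 1) n, ((m - 1).choose s : R) * A ^ (n - m) * (A - B) ^ (s + 1) * B ^ (m - s - 1)

theorem bergstromTail_of_le (A B : R) {n s : ℕ} (h : n ≤ s) : bergstromTail A B n s = 0 := by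
  rw [bergstromTail, Icc_eq_empty (by omega), sum_empty]

theorem bergstromTail_succ (A B : R) (n s : ℕ) :
    bergstromTail A B (n + 1) s =
      A * bergstromTail A B n s + (n.choose s : R) * (A - B) ^ (s + 1) * B ^ (n - s) := by
  rcases lt_or_ge n s with h | h
  · rw [bergstromTail_of_le A B h, bergstromTail_of_le A B h.le, Nat.choose_eq_zero_of_lt h]
    simp
  · rw [bergstromTail, sum_Icc_succ_top (by omega), bergstromTail, mul_sum]
    congr 1
    · refine sum_congr rfl fun m hm => ?_
      rw [show n + 1 - m = n - m + 1 by grind, pow_succ]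
      ring
    · rw [Nat.add_sub_cancel, Nat.sub_self, pow_zero, show n + 1 - s - 1 = n - s by omega]
      ring

theorem bergstromTail_zero (A B : R) (n : ℕ) : bergstromTail A B n 0 = A ^ n - B ^ n := by
  induction n with
  | zero => simp [bergstromTail_of_le]
  | succ n ih =>
    rw [bergstromTail_succ, ih]
    simp only [Nat.choose_zero_right, Nat.cast_one, zero_add, pow_one, Nat.sub_zero]
    ring

theorem bergstromTail_eq_choose_mul_add (A B : R) (n s : ℕ) :
    bergstromTail A B n s =
      (n.choose (s + 1) : R) * B ^ (n - (s + 1)) * (A - B) ^ (s + 1)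
        + bergstromTail A B n (s + 1) := by
  rcases lt_or_ge n (s + 1) with h | h
  · rw [bergstromTail_of_le A B (by omega), bergstromTail_of_le A B (by omega),
      Nat.choose_eq_zero_of_lt h]
    simp
  induction n, h using Nat.le_induction with
  | base => simp [bergstromTail_succ, bergstromTail_of_le]
  | succ n hn ih =>
    obtain ⟨k, rfl⟩ : ∃ k, n = s + 1 + k := ⟨n - (s + 1), by omega⟩
    rw [bergstromTail_succ, bergstromTail_succ, ih, Nat.choose_succ_succ' (s + 1 + k),
      show s + 1 + k + 1 - (s + 1) = k + 1 by omega, show s + 1 + k - s = k + 1 by omega,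
      show s + 1 + k - (s + 1) = k by omega]
    push_cast
    ring

end

theorem bergstrom_identity_general {R : Type*} [CommRing R] (A B : R) (n s : ℕ) :
    A ^ n = ∑ m ∈ Finset.range (s + 1), (n.choose m : R) * B ^ (n - m) * (A - B) ^ m
      + ∑ m ∈ Finset.Icc (s + 1) n,
          ((m - 1).choose s : R) * A ^ (n - m) * (A - B) ^ (s + 1) * B ^ (m - s - 1) := by
  change A ^ n = _ + bergstromTail A B n s
  induction s with
  | zero => simp [bergstromTail_zero]
  | succ s ih => rw [sum_range_succ, ih, bergstromTail_eq_choose_mul_add]; ring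

/-- Bergström's identity. -/
theorem bergstrom_identity {R : Type*} [CommRing R] (A B : R) (n s : ℕ)
    (hn : 1 ≤ n) (hs : s ≤ n) :
    A ^ n = ∑ m ∈ Finset.range (s + 1), (n.choose m : R) * B ^ (n - m) * (A - B) ^ m
      + ∑ m ∈ Finset.Icc (s + 1) n,
          ((m - 1).choose s : R) * A ^ (n - m) * (A - B) ^ (s + 1) * B ^ (m - s - 1) :=
  bergstrom_identity_general A B n s
end

section
/- Let X be a nonnegative integer-valued random variable with finite factorial moments ν_j = E[X(X-1)···(X-j+1)], and let s ∈ {1,2,3}. Then for all real t, E[e^{itX}] = 1 + Σ_{l=1}^{s} ν_l (e^{it}-1)^l / l! + θ ν_{s+1} |e^{it}-1|^{s+1} / s! for some complex θ with |θ| ≤ 1. -/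
/-!
Put `w = e^{it} - 1`, so that `e^{itX} = (1 + w)^X = ∑ₖ C(X, k) wᵏ` and `E[C(X, k)] = ν_k / k!`.
If `‖1 + w‖ ≤ 1`, the remainder `r_n` of the binomial sum truncated after `wˢ` satisfies
`r_{n+1} = (1 + w) r_n + C(n, s) w^{s+1}`, so by Pascal's rule `‖r_n‖ ≤ C(n, s+1) ‖w‖^{s+1}`.
Taking expectations bounds the remainder of the expansion by
`ν_{s+1} ‖w‖^{s+1} / (s+1)! ≤ ν_{s+1} ‖w‖^{s+1} / s!`.
-/

open MeasureTheory Finset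

section BinomialRemainder

variable {R : Type*}

theorem sum_range_choose_succ_mul_pow [CommRing R] (w : R) (n s : ℕ) :
    ∑ k ∈ range (s + 1), ((n + 1).choose k : R) * w ^ k
      = (1 + w) * ∑ k ∈ range (s + 1), (n.choose k : R) * w ^ k
        - (n.choose s : R) * w ^ (s + 1) := by
  have hw : w * ∑ k ∈ range (s + 1), (n.choose k : R) * w ^ k
      = ∑ k ∈ range s, (n.choose k : R) * w ^ (k + 1) + (n.choose s : R) * w ^ (s + 1) := by
    rw [mul_sum, sum_range_succ]
    exact congrArg₂ _ (sum_congr rfl fun k _ => by ring) (by ring)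
  rw [add_mul, one_mul, hw, sum_range_succ', sum_range_succ' (fun k => (n.choose k : R) * w ^ k)]
  simp only [Nat.choose_succ_succ', Nat.cast_add, add_mul, sum_add_distrib, Nat.choose_zero_right]
  ring

theorem norm_one_add_pow_sub_sum_choose_le [SeminormedCommRing R] {w : R} (hw : ‖1 + w‖ ≤ 1)
    (s n : ℕ) :
    ‖(1 + w) ^ n - ∑ k ∈ range (s + 1), (n.choose k : R) * w ^ k‖
      ≤ n.choose (s + 1) * ‖w‖ ^ (s + 1) := by
  induction n with
  | zero => simp [sum_range_succ']
  | succ n ih =>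
    set r := (1 + w) ^ n - ∑ k ∈ range (s + 1), (n.choose k : R) * w ^ k
    have hrec : (1 + w) ^ (n + 1) - ∑ k ∈ range (s + 1), ((n + 1).choose k : R) * w ^ k
        = (1 + w) * r + (n.choose s : R) * w ^ (s + 1) := by
      rw [sum_range_choose_succ_mul_pow]; ring
    have hlast : ‖(n.choose s : R) * w ^ (s + 1)‖ ≤ n.choose s * ‖w‖ ^ (s + 1) := by
      rw [← nsmul_eq_mul]
      exact norm_nsmul_le.trans (by gcongr; exact norm_pow_le' w s.succ_pos)
    calc ‖(1 + w) ^ (n + 1) - ∑ k ∈ range (s + 1), ((n + 1).choose k : R) * w ^ k‖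
        ≤ ‖1 + w‖ * ‖r‖ + ‖(n.choose s : R) * w ^ (s + 1)‖ := by
          rw [hrec]; exact (norm_add_le _ _).trans (by gcongr; exact norm_mul_le _ _)
      _ ≤ n.choose (s + 1) * ‖w‖ ^ (s + 1) + n.choose s * ‖w‖ ^ (s + 1) := by
          exact add_le_add ((mul_le_of_le_one_left (norm_nonneg r) hw).trans ih) hlast
      _ = (n + 1).choose (s + 1) * ‖w‖ ^ (s + 1) := by
          rw [Nat.choose_succ_succ', Nat.cast_add]; ring

end BinomialRemainder

theorem Nat.cast_choose_eq_descFactorial_div_factorial (K : Type*) [DivisionSemiring K]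
    [CharZero K] (n k : ℕ) : (n.choose k : K) = n.descFactorial k / k.factorial := by
  rw [Nat.choose_eq_descFactorial_div_factorial,
    Nat.cast_div (Nat.factorial_dvd_descFactorial n k) (Nat.cast_ne_zero.mpr k.factorial_ne_zero)]

theorem RCLike.exists_norm_le_one_eq_mul_ofReal {𝕜 : Type*} [RCLike 𝕜] {x : 𝕜} {D : ℝ}
    (h : ‖x‖ ≤ D) : ∃ θ : 𝕜, ‖θ‖ ≤ 1 ∧ x = θ * D := by
  rcases (norm_nonneg x).trans h |>.eq_or_lt with hD | hD
  · exact ⟨0, by simp, by simpa [← hD] using h⟩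
  · refine ⟨x / D, ?_, ?_⟩
    · rw [norm_div, RCLike.norm_ofReal, abs_of_pos hD]
      exact div_le_one_of_le₀ h hD.le
    · rw [div_mul_cancel₀ x (RCLike.ofReal_ne_zero.mpr hD.ne')]

section FactorialMoments

variable {Ω : Type*} [MeasurableSpace Ω] {μ : Measure Ω} {X : Ω → ℕ}

noncomputable def factorialMoment (μ : Measure Ω) (X : Ω → ℕ) (l : ℕ) : ℝ :=
  ∫ ω, ((X ω).descFactorial l : ℝ) ∂μ

theorem factorialMoment_nonneg (μ : Measure Ω) (X : Ω → ℕ) (l : ℕ) :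
    0 ≤ factorialMoment μ X l :=
  integral_nonneg fun _ => Nat.cast_nonneg _

theorem aemeasurable_of_integrable_natCast (hX : Integrable (fun ω => (X ω : ℝ)) μ) :
    AEMeasurable X μ := by
  simpa [Function.comp_def] using Nat.measurable_floor.comp_aemeasurable hX.aemeasurable

theorem integrable_choose_mul_pow {k : ℕ}
    (hk : Integrable (fun ω => ((X ω).descFactorial k : ℝ)) μ) (w : ℂ) :
    Integrable (fun ω => ((X ω).choose k : ℂ) * w ^ k) μ := by
  simp_rw [Nat.cast_choose_eq_descFactorial_div_factorial, div_mul_eq_mul_div, mul_div_assoc]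
  exact_mod_cast hk.ofReal.mul_const (w ^ k / k.factorial)

theorem integral_choose_mul_pow (k : ℕ) (w : ℂ) :
    ∫ ω, ((X ω).choose k : ℂ) * w ^ k ∂μ = factorialMoment μ X k * w ^ k / k.factorial := by
  simp_rw [Nat.cast_choose_eq_descFactorial_div_factorial, div_mul_eq_mul_div, mul_div_assoc]
  rw [integral_mul_const, factorialMoment, ← integral_complex_ofReal]
  push_cast
  ring

theorem norm_integral_pow_sub_sum_factorialMoment_le {s : ℕ}
    (hint : ∀ k ≤ s + 1, Integrable (fun ω => ((X ω).descFactorial k : ℝ)) μ) {z : ℂ}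
    (hz : ‖z‖ ≤ 1) :
    ‖∫ ω, z ^ X ω ∂μ - ∑ k ∈ range (s + 1), factorialMoment μ X k * (z - 1) ^ k / k.factorial‖
      ≤ factorialMoment μ X (s + 1) * ‖z - 1‖ ^ (s + 1) / (s + 1).factorial := by
  have : IsFiniteMeasure μ :=
    (integrable_const_iff.mp (by simpa using hint 0 (Nat.zero_le _))).resolve_left one_ne_zero
  have hXm : AEMeasurable X μ :=
    aemeasurable_of_integrable_natCast (by simpa using hint 1 (by omega))
  have hpow : Integrable (fun ω => z ^ X ω) μ :=
    .mono' (integrable_const 1) (measurable_from_nat.comp_aemeasurable hXm).aestronglyMeasurable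
      (.of_forall fun ω => by simpa using pow_le_one₀ (norm_nonneg z) hz)
  have hterm : ∀ k ∈ range (s + 1), Integrable (fun ω => ((X ω).choose k : ℂ) * (z - 1) ^ k) μ :=
    fun k hk => integrable_choose_mul_pow (hint k (by simp at hk; omega)) _
  have hrem : ∀ ω, ‖z ^ X ω - ∑ k ∈ range (s + 1), ((X ω).choose k : ℂ) * (z - 1) ^ k‖
      ≤ ((X ω).descFactorial (s + 1) : ℝ) * (‖z - 1‖ ^ (s + 1) / (s + 1).factorial) := fun ω => by
    have h := norm_one_add_pow_sub_sum_choose_le (w := z - 1) (by rwa [add_sub_cancel]) s (X ω)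
    rw [add_sub_cancel, Nat.cast_choose_eq_descFactorial_div_factorial] at h
    exact h.trans_eq (by ring)
  simp_rw [← integral_choose_mul_pow]
  rw [← integral_finsetSum _ hterm, ← integral_sub hpow (integrable_finsetSum _ hterm),
    factorialMoment, mul_div_assoc, ← integral_mul_const]
  exact norm_integral_le_of_norm_le ((hint _ le_rfl).mul_const _) (.of_forall hrem)

end FactorialMoments

theorem charFun_factorial_expansion_general {Ω : Type*} [MeasurableSpace Ω] (μ : Measure Ω)
    [IsProbabilityMeasure μ] (X : Ω → ℕ) (s : ℕ)
    (hint : ∀ l ≤ s + 1, Integrable (fun ω => ((X ω).descFactorial l : ℝ)) μ)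
    (t : ℝ) :
    ∃ θ : ℂ, ‖θ‖ ≤ 1 ∧
      (∫ ω, Complex.exp (t * (X ω : ℂ) * Complex.I) ∂μ)
        = 1 + ∑ l ∈ Finset.Icc 1 s,
            ((∫ ω, ((X ω).descFactorial l : ℝ) ∂μ : ℝ) : ℂ)
              * (Complex.exp (t * Complex.I) - 1) ^ l / (l.factorial : ℂ)
          + θ * (((∫ ω, ((X ω).descFactorial (s + 1) : ℝ) ∂μ)
              * ‖Complex.exp (t * Complex.I) - 1‖ ^ (s + 1) / (s.factorial : ℝ) : ℝ) : ℂ) := by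
  set z := Complex.exp (t * Complex.I)
  have hexp : ∀ n : ℕ, Complex.exp (t * n * Complex.I) = z ^ n := fun n => by
    rw [← Complex.exp_nat_mul]; ring_nf
  have hsum : 1 + ∑ l ∈ Icc 1 s, (factorialMoment μ X l : ℂ) * (z - 1) ^ l / l.factorial
      = ∑ l ∈ range (s + 1), (factorialMoment μ X l : ℂ) * (z - 1) ^ l / l.factorial := by
    rw [sum_range_eq_add_Ico _ (n := s + 1) s.succ_pos, Ico_add_one_right_eq_Icc]
    simp [factorialMoment]
  have hbound := norm_integral_pow_sub_sum_factorialMoment_le hint (z := z)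
    (Complex.norm_exp_ofReal_mul_I t).le
  obtain ⟨θ, hθ, hrem⟩ := RCLike.exists_norm_le_one_eq_mul_ofReal <| hbound.trans <|
    div_le_div_of_nonneg_left (by have := factorialMoment_nonneg μ X (s + 1); positivity)
      (by positivity) (Nat.cast_le.mpr (s.factorial_le s.le_succ))
  refine ⟨θ, hθ, ?_⟩
  simp_rw [hexp]
  simp only [← factorialMoment.eq_1]
  rw [hsum]
  exact eq_add_of_sub_eq' hrem

/-- Expansion of the characteristic function of a nonnegative integer random
variable in powers of (e^{it}−1), with factorial-moment coefficients. -/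
theorem charFun_factorial_expansion {Ω : Type*} [MeasurableSpace Ω] (μ : Measure Ω)
    [IsProbabilityMeasure μ] (X : Ω → ℕ) (hX : Measurable X)
    (s : ℕ) (hs : s = 1 ∨ s = 2 ∨ s = 3)
    (hint : ∀ l ≤ s + 1, Integrable (fun ω => ((X ω).descFactorial l : ℝ)) μ)
    (t : ℝ) :
    ∃ θ : ℂ, ‖θ‖ ≤ 1 ∧
      (∫ ω, Complex.exp (t * (X ω : ℂ) * Complex.I) ∂μ)
        = 1 + ∑ l ∈ Finset.Icc 1 s,
            ((∫ ω, ((X ω).descFactorial l : ℝ) ∂μ : ℝ) : ℂ)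
              * (Complex.exp (t * Complex.I) - 1) ^ l / (l.factorial : ℂ)
          + θ * (((∫ ω, ((X ω).descFactorial (s + 1) : ℝ) ∂μ)
              * ‖Complex.exp (t * Complex.I) - 1‖ ^ (s + 1) / (s.factorial : ℝ) : ℝ) : ℂ) :=
  charFun_factorial_expansion_general μ X s hint t
end

section
/- Let λ > 0 and k be a nonnegative integer. Then ∫_{-π}^{π} |sin(t/2)|^k e^{-λ sin²(t/2)} dt ≤ C(k) / max(1, λ^{(k+1)/2}) for a constant C(k) depending only on k. -/
/-!
Write `s = |sin (t / 2)|`, so that `s ≥ |t| / π` on `[-π, π]` by Jordan's inequality. Splitting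
`exp (-λ s²)` into two halves, one half absorbs `s ^ k` at the cost of `λ ^ (-k / 2)`, since
`y ^ k * exp (-y² / 2) ≤ k! * √e`, and the other is dominated by the Gaussian
`exp (-λ t² / (2 π²))`, whose integral is of order `λ ^ (-1 / 2)`. For `λ ≤ 1` the trivial bound
`2 π` is used instead.
-/

open Real
open scoped Nat

lemma pow_mul_exp_neg_sq_div_two_le (k : ℕ) {y : ℝ} (hy : 0 ≤ y) :
    y ^ k * exp (-(y ^ 2 / 2)) ≤ k ! * exp (1 / 2) :=
  calc y ^ k * exp (-(y ^ 2 / 2))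
      ≤ k ! * exp y * exp (-(y ^ 2 / 2)) := by
        gcongr
        exact (div_le_iff₀' (by positivity)).1 (Real.pow_div_factorial_le_exp y hy k)
    _ = k ! * exp (y - y ^ 2 / 2) := by rw [mul_assoc, ← exp_add, sub_eq_add_neg]
    _ ≤ k ! * exp (1 / 2) := by gcongr; nlinarith [sq_nonneg (y - 1)]

lemma sq_div_pi_sq_le_sin_half_sq {t : ℝ} (ht : |t| ≤ π) : t ^ 2 / π ^ 2 ≤ sin (t / 2) ^ 2 := by
  have h : |t| / π ≤ |sin (t / 2)| :=
    calc |t| / π = 2 / π * |t / 2| := by rw [abs_div, abs_two]; ring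
      _ ≤ |sin (t / 2)| := mul_abs_le_abs_sin (by rw [abs_div, abs_two]; linarith)
  calc t ^ 2 / π ^ 2 = (|t| / π) ^ 2 := by rw [div_pow, sq_abs]
    _ ≤ |sin (t / 2)| ^ 2 := by gcongr
    _ = sin (t / 2) ^ 2 := sq_abs _

lemma abs_sin_half_pow_mul_exp_le (k : ℕ) {r t : ℝ} (hr : 0 < r) (ht : |t| ≤ π) :
    |sin (t / 2)| ^ k * exp (-r ^ 2 * sin (t / 2) ^ 2)
      ≤ k ! * exp (1 / 2) / r ^ k * exp (-(r ^ 2 / (2 * π ^ 2)) * t ^ 2) := by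
  set s := |sin (t / 2)|
  have hsin : sin (t / 2) ^ 2 = s ^ 2 := (sq_abs _).symm
  have hrs := pow_mul_exp_neg_sq_div_two_le k (mul_nonneg hr.le (abs_nonneg (sin (t / 2))))
  have hgauss : exp (-((r * s) ^ 2 / 2)) ≤ exp (-(r ^ 2 / (2 * π ^ 2)) * t ^ 2) := by
    have hts := hsin ▸ sq_div_pi_sq_le_sin_half_sq ht
    rw [exp_le_exp, neg_mul, neg_le_neg_iff, mul_pow]
    calc r ^ 2 / (2 * π ^ 2) * t ^ 2 = r ^ 2 / 2 * (t ^ 2 / π ^ 2) := by ring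
      _ ≤ r ^ 2 / 2 * s ^ 2 := by gcongr
      _ = r ^ 2 * s ^ 2 / 2 := by ring
  calc s ^ k * exp (-r ^ 2 * sin (t / 2) ^ 2)
      = (r * s) ^ k * exp (-((r * s) ^ 2 / 2)) / r ^ k * exp (-((r * s) ^ 2 / 2)) := by
        rw [hsin, mul_pow, mul_div_right_comm, mul_div_cancel_left₀ _ (by positivity), mul_assoc,
          ← exp_add]
        ring_nf
    _ ≤ k ! * exp (1 / 2) / r ^ k * exp (-(r ^ 2 / (2 * π ^ 2)) * t ^ 2) := by gcongr

lemma integral_exp_neg_mul_sq_le {b a₁ a₂ : ℝ} (hb : 0 < b) (ha : a₁ ≤ a₂) :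
    ∫ t in a₁..a₂, exp (-b * t ^ 2) ≤ √(π / b) := by
  rw [intervalIntegral.integral_of_le ha, ← integral_gaussian b]
  exact MeasureTheory.setIntegral_le_integral (integrable_exp_neg_mul_sq hb)
    (.of_forall fun t => (exp_pos _).le)

lemma integral_abs_sin_half_pow_mul_exp_le_two_pi (k : ℕ) {l : ℝ} (hl : 0 ≤ l) :
    ∫ t in (-π)..π, |sin (t / 2)| ^ k * exp (-l * sin (t / 2) ^ 2) ≤ 2 * π := by
  have h := intervalIntegral.norm_integral_le_of_norm_le_const (a := -π) (b := π) (C := 1)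
    (f := fun t => |sin (t / 2)| ^ k * exp (-l * sin (t / 2) ^ 2)) fun t _ => by
      rw [norm_mul, norm_pow, Real.norm_eq_abs, abs_abs, Real.norm_of_nonneg (exp_pos _).le]
      exact mul_le_one₀ (pow_le_one₀ (abs_nonneg _) (abs_sin_le_one _))
        (exp_pos _).le (exp_le_one_iff.2 (by nlinarith [sq_nonneg (sin (t / 2))]))
  rw [sub_neg_eq_add, abs_of_pos (by linarith [pi_pos]), Real.norm_eq_abs] at h
  linarith [le_abs_self (∫ t in (-π)..π, |sin (t / 2)| ^ k * exp (-l * sin (t / 2) ^ 2))]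

lemma integral_abs_sin_half_pow_mul_exp_le_div_pow (k : ℕ) {r : ℝ} (hr : 0 < r) :
    ∫ t in (-π)..π, |sin (t / 2)| ^ k * exp (-r ^ 2 * sin (t / 2) ^ 2)
      ≤ k ! * exp (1 / 2) * √(2 * π ^ 3) / r ^ (k + 1) := by
  have hπ : -π ≤ π := by linarith [pi_pos]
  calc ∫ t in (-π)..π, |sin (t / 2)| ^ k * exp (-r ^ 2 * sin (t / 2) ^ 2)
      ≤ ∫ t in (-π)..π, k ! * exp (1 / 2) / r ^ k * exp (-(r ^ 2 / (2 * π ^ 2)) * t ^ 2) :=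
        intervalIntegral.integral_mono_on hπ (Continuous.intervalIntegrable (by fun_prop) _ _)
          (Continuous.intervalIntegrable (by fun_prop) _ _)
          fun t ht => abs_sin_half_pow_mul_exp_le k hr (abs_le.2 ht)
    _ = k ! * exp (1 / 2) / r ^ k * ∫ t in (-π)..π, exp (-(r ^ 2 / (2 * π ^ 2)) * t ^ 2) :=
        intervalIntegral.integral_const_mul _ _
    _ ≤ k ! * exp (1 / 2) / r ^ k * √(π / (r ^ 2 / (2 * π ^ 2))) := by
        gcongr
        exact integral_exp_neg_mul_sq_le (by positivity) hπ
    _ = k ! * exp (1 / 2) * √(2 * π ^ 3) / r ^ (k + 1) := by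
        rw [show π / (r ^ 2 / (2 * π ^ 2)) = 2 * π ^ 3 / r ^ 2 by field_simp,
          sqrt_div' _ (sq_nonneg r), sqrt_sq hr.le, pow_succ]
        ring

lemma le_max_div_max_one {a A B x : ℝ} (hA : a ≤ A) (hB : a ≤ B / x) :
    a ≤ max A B / max 1 x := by
  rcases max_choice 1 x with h | h <;> rw [h]
  · rw [div_one]
    exact hA.trans (le_max_left A B)
  · have hx : 0 ≤ x := zero_le_one.trans (h ▸ le_max_left 1 x)
    exact hB.trans (div_le_div_of_nonneg_right (le_max_right A B) hx)

/-- Integral smoothing bound: ∫_{-π}^{π} |sin(t/2)|^k e^{-λ sin²(t/2)} dt ≤ C(k)/max(1, λ^{(k+1)/2}). -/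
theorem sin_pow_exp_integral_bound (k : ℕ) :
    ∃ C : ℝ, 0 < C ∧ ∀ l : ℝ, 0 < l →
      (∫ t in (-π)..π, |Real.sin (t / 2)| ^ k * Real.exp (-l * Real.sin (t / 2) ^ 2))
        ≤ C / max 1 (l ^ (((k : ℝ) + 1) / 2)) := by
  refine ⟨max (2 * π) (k ! * exp (1 / 2) * √(2 * π ^ 3)), by positivity, fun l hl => ?_⟩
  have hpow : l ^ (((k : ℝ) + 1) / 2) = √l ^ (k + 1) := by
    rw [rpow_div_two_eq_sqrt _ hl.le]
    exact_mod_cast rpow_natCast √l (k + 1)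
  have hdecay := integral_abs_sin_half_pow_mul_exp_le_div_pow k (sqrt_pos.2 hl)
  rw [sq_sqrt hl.le] at hdecay
  rw [hpow]
  exact le_max_div_max_one (integral_abs_sin_half_pow_mul_exp_le_two_pi k hl.le) hdecay
end

section
/- Let M be a finite signed measure on ℤ with Σ_k |k||M{k}| < ∞ and Fourier transform M̂. Then for every real v and every u > 0, the total variation norm satisfies ‖M‖ = Σ_k |M{k}| ≤ (1 + uπ)^{1/2} · ( (1/2π) ∫_{-π}^{π} [ |M̂(t)|² + u^{-2} |(e^{-itv} M̂(t))'|² ] dt )^{1/2}. -/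
/-!
Write `w k = 1 + ((k - v) / u) ^ 2`. Parseval's identity on `[-π, π]`, applied to `M̂` and to
`(e^{-itv} M̂)' = i e^{-itv} ∑ (k - v) M{k} e^{itk}`, turns the integral into `2π ∑ w k M{k}²`.
Cauchy–Schwarz then gives `‖M‖² ≤ (∑ 1 / w k) (∑ w k M{k}²)`, and `∑_k 1 / w k ≤ 1 + uπ`: the
function `x ↦ 1 / w x` is unimodal with peak value `1` at `v` and integral `uπ`, so each integer
away from the peak is dominated by the integral over the unit interval next to it on the side of
the peak, and the two integers around the peak by `1` plus the integral between them.
-/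

open Real MeasureTheory Set

/-- The Fourier transform of a (signed) measure `M` on ℤ, identified with its
sequence of point masses. -/
noncomputable def fourierZ (M : ℤ → ℝ) (t : ℝ) : ℂ :=
  ∑' k : ℤ, (M k : ℂ) * Complex.exp (t * k * Complex.I)

lemma summable_sq_of_summable_abs {ι : Type*} {M : ι → ℝ} (hM : Summable fun k => |M k|) :
    Summable fun k => M k ^ 2 :=
  (hM.mul_left (∑' k, |M k|)).of_nonneg_of_le (fun k => sq_nonneg _) fun k => by
    rw [← sq_abs, sq]
    exact mul_le_mul_of_nonneg_right (hM.le_tsum k fun _ _ => abs_nonneg _) (abs_nonneg _)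

lemma tsum_abs_le_sqrt_mul_sqrt_of_sum_inv_le {ι : Type*} {M w : ι → ℝ} {W : ℝ}
    (hw : ∀ k, 0 < w k) (hW : ∀ S : Finset ι, ∑ k ∈ S, (w k)⁻¹ ≤ W)
    (hwM : Summable fun k => w k * M k ^ 2) :
    ∑' k, |M k| ≤ √W * √(∑' k, w k * M k ^ 2) := by
  have hinv : ∀ k, 0 ≤ (w k)⁻¹ := fun k => (inv_pos.2 (hw k)).le
  have hterm : ∀ k, 0 ≤ w k * M k ^ 2 := fun k => mul_nonneg (hw k).le (sq_nonneg _)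
  have hW0 : 0 ≤ W := by simpa using hW ∅
  refine Real.tsum_le_of_sum_le (fun k => abs_nonneg _) fun S => ?_
  rw [← Real.sqrt_mul hW0]
  refine Real.le_sqrt_of_sq_le ?_
  calc (∑ k ∈ S, |M k|) ^ 2 ≤ (∑ k ∈ S, (w k)⁻¹) * ∑ k ∈ S, w k * M k ^ 2 :=
        Finset.sum_sq_le_sum_mul_sum_of_sq_le_mul S (fun k _ => hinv k) (fun k _ => hterm k)
          fun k _ => by rw [inv_mul_cancel_left₀ (hw k).ne', sq_abs]
    _ ≤ W * ∑' k, w k * M k ^ 2 :=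
        mul_le_mul (hW S) (hwM.sum_le_tsum S fun k _ => hterm k)
          (Finset.sum_nonneg fun k _ => hterm k) hW0

lemma intervalIntegral_tsum_of_norm_le {ι E : Type*} [Countable ι] [NormedAddCommGroup E]
    [NormedSpace ℝ E] [CompleteSpace E] {F : ι → ℝ → E} {C : ι → ℝ} (hF : ∀ i, Continuous (F i))
    (hC : Summable C) (hFC : ∀ i t, ‖F i t‖ ≤ C i) (a b : ℝ) :
    ∫ t in a..b, ∑' i, F i t = ∑' i, ∫ t in a..b, F i t :=
  (intervalIntegral.hasSum_integral_of_dominated_convergence (fun i _ => C i)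
    (fun i => (hF i).aestronglyMeasurable) (fun i => .of_forall fun t _ => hFC i t)
    (.of_forall fun _ _ => hC) intervalIntegrable_const
    (.of_forall fun t _ => (hC.of_norm_bounded (hFC · t)).hasSum)).tsum_eq.symm

def UnimodalAt (f : ℝ → ℝ) (c : ℝ) : Prop :=
  MonotoneOn f (Iic c) ∧ AntitoneOn f (Ici c)

namespace UnimodalAt

variable {f : ℝ → ℝ} {c : ℝ}

lemma apply_le (hf : UnimodalAt f c) (x : ℝ) : f x ≤ f c := by
  rcases le_total x c with hx | hx
  · exact hf.1 hx self_mem_Iic hx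
  · exact hf.2 self_mem_Ici hx hx

lemma add_apply_le_integral (hf : UnimodalAt f c) (hfi : Integrable f) {m : ℝ} (hmc : m ≤ c)
    (hcm : c ≤ m + 1) : f m + f (m + 1) ≤ f c + ∫ x in m..m + 1, f x := by
  have hmin : min (f m) (f (m + 1)) ≤ ∫ x in m..m + 1, f x := by
    calc min (f m) (f (m + 1)) = ∫ _ in m..m + 1, min (f m) (f (m + 1)) := by simp
      _ ≤ ∫ x in m..m + 1, f x := by
        refine intervalIntegral.integral_mono_on (by linarith) intervalIntegrable_const
          hfi.intervalIntegrable fun x hx => ?_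
        rcases le_total x c with hxc | hxc
        · exact min_le_of_left_le (hf.1 (by simp [hmc]) hxc hx.1)
        · exact min_le_of_right_le (hf.2 hxc (by simp [hcm]) hx.2)
  have hmax : max (f m) (f (m + 1)) ≤ f c := max_le (hf.apply_le _) (hf.apply_le _)
  linarith [min_add_max (f m) (f (m + 1))]

lemma sum_range_le (hf : UnimodalAt f c) (hfi : Integrable f) (hf0 : 0 ≤ f) {m : ℝ}
    (hmc : m ≤ c) (hcm : c ≤ m + 1) (N : ℕ) :
    ∑ i ∈ Finset.range (N + 2 + N), f (m - N + i) ≤ f c + ∫ x, f x := by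
  have hleft : ∑ i ∈ Finset.range N, f (m - N + i) ≤ ∫ x in m - N..m, f x := by
    simpa using MonotoneOn.sum_le_integral (x₀ := m - N) (a := N)
      (hf.1.mono fun x hx => mem_Iic.2 (by linarith [hx.2]))
  have hright : ∑ i ∈ Finset.range N, f (m + 1 + ↑(i + 1)) ≤ ∫ x in m + 1..m + 1 + N, f x :=
    AntitoneOn.sum_le_integral (hf.2.mono fun x hx => mem_Ici.2 (by linarith [hx.1]))
  have hsplit : ∑ i ∈ Finset.range (N + 2 + N), f (m - N + i) = ∑ i ∈ Finset.range N,
      f (m - N + i) + (f m + f (m + 1)) + ∑ i ∈ Finset.range N, f (m + 1 + ↑(i + 1)) := by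
    rw [Finset.sum_range_add, Finset.sum_range_add, Finset.sum_range_succ, Finset.sum_range_one]
    congr 2
    · congr 2 <;> push_cast <;> ring
    · funext i; push_cast; ring_nf
  have hwhole : ∫ x in m - N..m + 1 + N, f x ≤ ∫ x, f x := by
    rw [intervalIntegral.integral_of_le (by linarith [(N.cast_nonneg : (0 : ℝ) ≤ N)])]
    exact setIntegral_le_integral hfi (.of_forall hf0)
  have hadd := intervalIntegral.integral_add_adjacent_intervals
    (hfi.intervalIntegrable (a := m - N) (b := m)) (hfi.intervalIntegrable (b := m + 1))
  have hadd' := intervalIntegral.integral_add_adjacent_intervals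
    (hfi.intervalIntegrable (a := m - N) (b := m + 1)) (hfi.intervalIntegrable (b := m + 1 + N))
  linarith [hf.add_apply_le_integral hfi hmc hcm]

lemma sum_int_le (hf : UnimodalAt f c) (hfi : Integrable f) (hf0 : 0 ≤ f) (S : Finset ℤ) :
    ∑ k ∈ S, f k ≤ f c + ∫ x, f x := by
  set m := ⌊c⌋
  set N := S.sup fun k => (k - m).natAbs
  have hS : S ⊆ Finset.Ico (m - N) (m + N + 2) := fun k hk => by
    have := Finset.le_sup (f := fun k => (k - m).natAbs) hk
    simp only [Finset.mem_Ico]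
    omega
  calc ∑ k ∈ S, f k ≤ ∑ k ∈ Finset.Ico (m - N) (m + N + 2), f k :=
        Finset.sum_le_sum_of_subset_of_nonneg hS fun _ _ _ => hf0 _
    _ = ∑ i ∈ Finset.range (N + 2 + N), f (m - N + i) := by
        rw [Int.Ico_eq_finset_map, Finset.sum_map,
          show (m + N + 2 - (m - N)).toNat = N + 2 + N by omega]
        simp
    _ ≤ f c + ∫ x, f x :=
        hf.sum_range_le hfi hf0 (Int.floor_le c) (Int.lt_floor_add_one c).le N

end UnimodalAt

section Lorentzian

variable {u v : ℝ}

lemma integrable_inv_one_add_sq_sub_div (hu : u ≠ 0) :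
    Integrable fun x : ℝ => (1 + ((x - v) / u) ^ 2)⁻¹ :=
  (integrable_inv_one_add_sq.comp_div hu).comp_sub_right v

lemma integral_inv_one_add_sq_sub_div (hu : 0 < u) :
    ∫ x : ℝ, (1 + ((x - v) / u) ^ 2)⁻¹ = u * π := by
  rw [integral_sub_right_eq_self (fun x => (1 + (x / u) ^ 2)⁻¹) v,
    Measure.integral_comp_div (fun x => (1 + x ^ 2)⁻¹) u, integral_univ_inv_one_add_sq,
    smul_eq_mul, abs_of_pos hu]

lemma inv_one_add_sq_sub_div_le_of_sq_le {x y : ℝ} (h : (y - v) ^ 2 ≤ (x - v) ^ 2) :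
    (1 + ((x - v) / u) ^ 2)⁻¹ ≤ (1 + ((y - v) / u) ^ 2)⁻¹ := by
  refine inv_anti₀ (by positivity) ?_
  rw [div_pow, div_pow]
  gcongr

lemma unimodalAt_inv_one_add_sq_sub_div :
    UnimodalAt (fun x : ℝ => (1 + ((x - v) / u) ^ 2)⁻¹) v :=
  ⟨fun x _ y hy hxy => inv_one_add_sq_sub_div_le_of_sq_le (by rw [mem_Iic] at hy; nlinarith),
    fun x hx _ _ hxy => inv_one_add_sq_sub_div_le_of_sq_le (by rw [mem_Ici] at hx; nlinarith)⟩

lemma sum_inv_one_add_sq_sub_div_le (hu : 0 < u) (S : Finset ℤ) :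
    ∑ k ∈ S, (1 + ((k - v) / u) ^ 2)⁻¹ ≤ 1 + u * π := by
  simpa [integral_inv_one_add_sq_sub_div hu] using
    unimodalAt_inv_one_add_sq_sub_div.sum_int_le (integrable_inv_one_add_sq_sub_div hu.ne')
      (fun x => by positivity) S

end Lorentzian

lemma norm_exp_mul_intCast_mul_I (t : ℝ) (k : ℤ) : ‖Complex.exp (t * k * Complex.I)‖ = 1 := by
  exact_mod_cast Complex.norm_exp_ofReal_mul_I (t * k)

lemma integral_exp_mul_intCast_mul_I (n : ℤ) :
    ∫ t in (-π)..π, Complex.exp (t * n * Complex.I) = if n = 0 then (2 * π : ℂ) else 0 := by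
  rcases eq_or_ne n 0 with rfl | hn
  · simp only [Int.cast_zero, mul_zero, zero_mul, Complex.exp_zero,
      intervalIntegral.integral_const, sub_neg_eq_add, Complex.real_smul, Complex.ofReal_add,
      mul_one, if_pos]
    ring
  · have hc : (n * Complex.I : ℂ) ≠ 0 := mul_ne_zero (by exact_mod_cast hn) Complex.I_ne_zero
    simp_rw [mul_assoc, mul_comm (_ : ℂ) (n * Complex.I)]
    rw [integral_exp_mul_complex hc, if_neg hn]
    have hperiod : Complex.exp (n * Complex.I * π) = Complex.exp (n * Complex.I * ↑(-π)) :=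
      Complex.exp_eq_exp_iff_exists_int.2 ⟨n, by push_cast; ring⟩
    rw [hperiod, sub_self, zero_div]

section FourierZ

variable {M N : ℤ → ℝ}

lemma norm_ofReal_mul_exp_mul_intCast_mul_I (a t : ℝ) (k : ℤ) :
    ‖(a : ℂ) * Complex.exp (t * k * Complex.I)‖ = |a| := by
  rw [norm_mul, norm_exp_mul_intCast_mul_I, mul_one, Complex.norm_real, Real.norm_eq_abs]

lemma summable_fourierZ_term (hM : Summable fun k => |M k|) (t : ℝ) :
    Summable fun k : ℤ => (M k : ℂ) * Complex.exp (t * k * Complex.I) :=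
  .of_norm (by simpa only [norm_ofReal_mul_exp_mul_intCast_mul_I] using hM)

lemma norm_fourierZ_le (hM : Summable fun k => |M k|) (t : ℝ) :
    ‖fourierZ M t‖ ≤ ∑' k, |M k| :=
  (norm_tsum_le_tsum_norm (summable_fourierZ_term hM t).norm).trans_eq
    (by simp only [norm_ofReal_mul_exp_mul_intCast_mul_I])

lemma continuous_fourierZ (hM : Summable fun k => |M k|) : Continuous (fourierZ M) :=
  continuous_tsum (fun k => by fun_prop) hM fun k t =>
    (norm_ofReal_mul_exp_mul_intCast_mul_I _ t k).le

lemma fourierZ_sub (hM : Summable fun k => |M k|) (hN : Summable fun k => |N k|) (t : ℝ) :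
    fourierZ (fun k => M k - N k) t = fourierZ M t - fourierZ N t := by
  simp only [fourierZ, Complex.ofReal_sub, sub_mul]
  exact (summable_fourierZ_term hM t).tsum_sub (summable_fourierZ_term hN t)

lemma fourierZ_const_mul (a : ℝ) (t : ℝ) :
    fourierZ (fun k => a * M k) t = a * fourierZ M t := by
  simp only [fourierZ, Complex.ofReal_mul, mul_assoc, tsum_mul_left]

lemma hasDerivAt_fourierZ (hM : Summable fun k => |M k|)
    (hM1 : Summable fun k : ℤ => |(k : ℝ)| * |M k|) (t : ℝ) :
    HasDerivAt (fourierZ M) (Complex.I * fourierZ (fun k => k * M k) t) t := by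
  have hterm (k : ℤ) (y : ℝ) : HasDerivAt (fun s : ℝ => (M k : ℂ) * Complex.exp (s * k * Complex.I))
      ((M k : ℂ) * (Complex.exp (y * k * Complex.I) * (k * Complex.I))) y := by
    refine HasDerivAt.const_mul _ (HasDerivAt.cexp ?_)
    simpa [mul_assoc] using ((hasDerivAt_id (y : ℂ)).comp_ofReal).mul_const ((k : ℂ) * Complex.I)
  have hbound (k : ℤ) (s : ℝ) :
      ‖(M k : ℂ) * (Complex.exp (s * k * Complex.I) * (k * Complex.I))‖ ≤ |(k : ℝ)| * |M k| := by
    simp only [norm_mul, norm_exp_mul_intCast_mul_I, Complex.norm_I, Complex.norm_real,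
      Complex.norm_intCast, Real.norm_eq_abs]
    exact le_of_eq (by ring)
  have hderiv : Complex.I * fourierZ (fun k => k * M k) t =
      ∑' k : ℤ, (M k : ℂ) * (Complex.exp (t * k * Complex.I) * (k * Complex.I)) := by
    simp only [fourierZ, ← tsum_mul_left]
    congr 1; funext k; push_cast; ring
  rw [hderiv]
  exact hasDerivAt_tsum hM1 hterm hbound (summable_fourierZ_term hM 0) t

lemma deriv_exp_mul_fourierZ (hM : Summable fun k => |M k|)
    (hM1 : Summable fun k : ℤ => |(k : ℝ)| * |M k|) (v t : ℝ) :
    deriv (fun s : ℝ => Complex.exp (-(s * v) * Complex.I) * fourierZ M s) t =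
      Complex.exp (-(t * v) * Complex.I) * (Complex.I * fourierZ (fun k => (k - v) * M k) t) := by
  have hexp : HasDerivAt (fun s : ℝ => Complex.exp (-(s * v) * Complex.I))
      (Complex.exp (-(t * v) * Complex.I) * (-(v * Complex.I))) t := by
    refine HasDerivAt.cexp ?_
    simpa using (((hasDerivAt_id (t : ℂ)).comp_ofReal).mul_const (v : ℂ)).neg.mul_const Complex.I
  have hkM : Summable fun k : ℤ => |(k : ℝ) * M k| := by simpa only [abs_mul] using hM1
  have hvM : Summable fun k : ℤ => |v * M k| := by simpa only [abs_mul] using hM.mul_left |v|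
  refine (hexp.mul (hasDerivAt_fourierZ hM hM1 t)).deriv.trans ?_
  simp only [sub_mul]
  rw [fourierZ_sub hkM hvM, fourierZ_const_mul]
  ring

lemma integral_exp_neg_mul_fourierZ (hM : Summable fun k => |M k|) (k : ℤ) :
    ∫ t in (-π)..π, Complex.exp (-(t * k * Complex.I)) * fourierZ M t = 2 * π * M k := by
  have hexpand (t : ℝ) : Complex.exp (-(t * k * Complex.I)) * fourierZ M t =
      ∑' j : ℤ, (M j : ℂ) * Complex.exp (t * ↑(j - k) * Complex.I) := by
    rw [fourierZ, ← tsum_mul_left]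
    congr 1; funext j
    rw [mul_left_comm, ← Complex.exp_add]
    push_cast; ring_nf
  simp_rw [hexpand]
  rw [intervalIntegral_tsum_of_norm_le (fun j => by fun_prop) hM
    fun j t => (norm_ofReal_mul_exp_mul_intCast_mul_I _ t _).le]
  simp_rw [intervalIntegral.integral_const_mul, integral_exp_mul_intCast_mul_I, sub_eq_zero,
    mul_ite, mul_zero, tsum_ite_eq]
  ring

lemma integral_norm_fourierZ_sq (hM : Summable fun k => |M k|) :
    ∫ t in (-π)..π, ‖fourierZ M t‖ ^ 2 = 2 * π * ∑' k, M k ^ 2 := by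
  have hconj (t : ℝ) : (starRingEnd ℂ) (fourierZ M t) =
      ∑' k : ℤ, (M k : ℂ) * Complex.exp (-(t * k * Complex.I)) := by
    simp [fourierZ, Complex.conj_tsum, ← Complex.exp_conj]
  have hexpand (t : ℝ) : ((‖fourierZ M t‖ ^ 2 : ℝ) : ℂ) =
      ∑' k : ℤ, (M k : ℂ) * (Complex.exp (-(t * k * Complex.I)) * fourierZ M t) := by
    rw [Complex.ofReal_pow, ← Complex.conj_mul', hconj, ← tsum_mul_right]
    simp only [mul_assoc]
  apply Complex.ofReal_injective
  rw [← intervalIntegral.integral_ofReal]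
  simp_rw [hexpand]
  rw [intervalIntegral_tsum_of_norm_le (C := fun k => |M k| * ∑' j, |M j|)
    (fun k => by have := continuous_fourierZ hM; fun_prop) (hM.mul_right _) fun k t => ?_]
  · simp_rw [intervalIntegral.integral_const_mul, integral_exp_neg_mul_fourierZ hM]
    push_cast
    rw [← tsum_mul_left]
    congr 1; funext k; ring
  · have hexp : ‖Complex.exp (-(t * k * Complex.I))‖ = 1 := by
      simpa using norm_exp_mul_intCast_mul_I (-t) k
    rw [norm_mul, norm_mul, hexp, one_mul, Complex.norm_real, Real.norm_eq_abs]
    exact mul_le_mul_of_nonneg_left (norm_fourierZ_le hM t) (abs_nonneg _)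

lemma norm_deriv_exp_mul_fourierZ (hM : Summable fun k => |M k|)
    (hM1 : Summable fun k : ℤ => |(k : ℝ)| * |M k|) (v t : ℝ) :
    ‖deriv (fun s : ℝ => Complex.exp (-(s * v) * Complex.I) * fourierZ M s) t‖ =
      ‖fourierZ (fun k => (k - v) * M k) t‖ := by
  have hexp : ‖Complex.exp (-(t * v) * Complex.I)‖ = 1 := by
    simpa using Complex.norm_exp_ofReal_mul_I (-(t * v))
  rw [deriv_exp_mul_fourierZ hM hM1, norm_mul, norm_mul, hexp, Complex.norm_I, one_mul, one_mul]

lemma summable_abs_sub_mul (hM : Summable fun k => |M k|)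
    (hM1 : Summable fun k : ℤ => |(k : ℝ)| * |M k|) (v : ℝ) :
    Summable fun k : ℤ => |((k : ℝ) - v) * M k| :=
  (hM1.add (hM.mul_left |v|)).of_nonneg_of_le (fun _ => abs_nonneg _) fun k => by
    rw [abs_mul, ← add_mul]
    exact mul_le_mul_of_nonneg_right (abs_sub _ _) (abs_nonneg _)

lemma mean_norm_sq_add_norm_deriv_sq_eq_tsum (hM : Summable fun k => |M k|)
    (hM1 : Summable fun k : ℤ => |(k : ℝ)| * |M k|) (u v : ℝ) :
    (1 / (2 * π)) * ∫ t in (-π)..π, ‖fourierZ M t‖ ^ 2 +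
        (1 / u ^ 2) * ‖deriv (fun s : ℝ => Complex.exp (-(s * v) * Complex.I) * fourierZ M s) t‖ ^ 2
      = ∑' k : ℤ, (1 + ((k - v) / u) ^ 2) * M k ^ 2 := by
  set N : ℤ → ℝ := fun k => (k - v) * M k with hN_def
  have hN : Summable fun k => |N k| := summable_abs_sub_mul hM hM1 v
  have hcM := continuous_fourierZ hM
  have hcN := continuous_fourierZ hN
  have hweighted : ∑' k : ℤ, (1 + ((k - v) / u) ^ 2) * M k ^ 2 =
      ∑' k, M k ^ 2 + 1 / u ^ 2 * ∑' k, N k ^ 2 := by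
    rw [← tsum_mul_left, ← (summable_sq_of_summable_abs hM).tsum_add
      ((summable_sq_of_summable_abs hN).mul_left _)]
    congr 1; funext k; rw [hN_def]; ring
  simp_rw [norm_deriv_exp_mul_fourierZ hM hM1, ← hN_def]
  rw [intervalIntegral.integral_add
      ((by fun_prop : Continuous fun t => ‖fourierZ M t‖ ^ 2).intervalIntegrable _ _)
      ((by fun_prop : Continuous fun t => 1 / u ^ 2 * ‖fourierZ N t‖ ^ 2).intervalIntegrable _ _),
    intervalIntegral.integral_const_mul, integral_norm_fourierZ_sq hM, integral_norm_fourierZ_sq hN,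
    hweighted]
  field_simp

end FourierZ

/-- Total variation bound via the Fourier transform and its derivative. -/
theorem total_variation_le_fourier_bound (M : ℤ → ℝ)
    (hM : Summable fun k : ℤ => |M k|)
    (hM1 : Summable fun k : ℤ => |(k : ℝ)| * |M k|) (v : ℝ) (u : ℝ) (hu : 0 < u) :
    (∑' k : ℤ, |M k|) ≤ Real.sqrt (1 + u * π) *
      Real.sqrt ((1 / (2 * π)) * ∫ t in (-π)..π,
        ‖fourierZ M t‖ ^ 2 +
          (1 / u ^ 2) *
            ‖deriv (fun s : ℝ => Complex.exp (-(s * v) * Complex.I) * fourierZ M s) t‖ ^ 2) := by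
  have hsum : Summable fun k : ℤ => (1 + ((k - v) / u) ^ 2) * M k ^ 2 :=
    ((summable_sq_of_summable_abs hM).add ((summable_sq_of_summable_abs
      (summable_abs_sub_mul hM hM1 v)).mul_left (1 / u ^ 2))).congr fun k => by ring
  rw [mean_norm_sq_add_norm_deriv_sq_eq_tsum hM hM1 u v]
  exact tsum_abs_le_sqrt_mul_sqrt_of_sum_inv_le (fun k => by positivity)
    (sum_inv_one_add_sq_sub_div_le hu) hsum
end

section
/- Let U = δ_1 − δ_0, t > 0 and j ≥ 1 an integer. Then ‖U^j e^{tU}‖ ≤ (2j/(te))^{j/2}, where U^j is the j-fold convolution power and e^{tU} is the convolution exponential. -/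
open Real

/-- Convolution of two (signed) measures on ℤ, identified with their point-mass
sequences. -/
noncomputable def convZ (f g : ℤ → ℝ) : ℤ → ℝ := fun n => ∑' k : ℤ, f k * g (n - k)

/-- Convolution powers, with `f^0 = δ_0`. -/
noncomputable def convPow (f : ℤ → ℝ) : ℕ → ℤ → ℝ
  | 0 => fun n => if n = 0 then 1 else 0
  | j + 1 => convZ f (convPow f j)

/-- Convolution exponential `exp(f) = Σ_{j≥0} f^{*j}/j!`. -/
noncomputable def convExp (f : ℤ → ℝ) : ℤ → ℝ :=
  fun n => ∑' j : ℕ, convPow f j n / (j.factorial : ℝ)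

/-- The measure `U = δ_1 − δ_0` on ℤ. -/
noncomputable def Umeas : ℤ → ℝ := fun n => if n = 1 then 1 else if n = 0 then -1 else 0

/-- Total variation norm of a measure on ℤ. -/
noncomputable def tvNorm (f : ℤ → ℝ) : ℝ := ∑' n : ℤ, |f n|

/-- Local norm of a measure on ℤ. -/
noncomputable def locNorm (f : ℤ → ℝ) : ℝ := ⨆ n : ℤ, |f n|

/-!
With `diffZ g n = g (n - 1) - g n` we have `U * g = diffZ g`, the exponential `e^{tU}` is the
Poisson law `π_t` (`poissonZ t`), and `π_t = π_s^{*j}` for `s = t / j`. As `diffZ` commutes with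
convolution, `U^j e^{tU} = (diffZ π_s)^{*j}`, whose norm is at most `‖diffZ π_s‖^j`. The Poisson
weights are unimodal with mode `⌊s⌋`, so `‖diffZ π_s‖ = 2 π_s(⌊s⌋)`. Finally
`2 π_s(m) ≤ √(2 / (e s))` for every `m`: maximising `s^(2m+1) e^{-2s}` at `s = m + 1/2` reduces
this to `(2m+1)^(2m+1) ≤ (2^m m! e^m)^2`, which is Stirling's bound for `m ≥ 4`.
-/

open scoped Nat

section Convolution

variable {f g : ℤ → ℝ}

-- `(n, k) ↦ (k, n - k)`
def convKernelEquiv : ℤ × ℤ ≃ ℤ × ℤ :=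
  (Equiv.prodComm ℤ ℤ).trans (Equiv.prodShear (Equiv.refl ℤ) Equiv.subRight)

lemma summable_abs_convKernel (hf : Summable fun n => |f n|) (hg : Summable fun n => |g n|) :
    Summable fun p : ℤ × ℤ => |f p.2 * g (p.1 - p.2)| := by
  have := convKernelEquiv.summable_iff.mpr
    (hf.mul_of_nonneg hg (fun _ => abs_nonneg _) fun _ => abs_nonneg _)
  simpa [convKernelEquiv, Function.comp_def, abs_mul] using this

lemma summable_convZ_apply (hf : Summable fun n => |f n|) (hg : Summable fun n => |g n|)
    (n : ℤ) : Summable fun k => f k * g (n - k) :=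
  ((summable_abs_convKernel hf hg).prod_factor n).of_abs

lemma abs_convZ_le (hf : Summable fun n => |f n|) (hg : Summable fun n => |g n|) (n : ℤ) :
    |convZ f g n| ≤ ∑' k, |f k * g (n - k)| := by
  simpa only [convZ, Real.norm_eq_abs] using
    norm_tsum_le_tsum_norm (summable_convZ_apply hf hg n).norm

lemma summable_abs_convZ (hf : Summable fun n => |f n|) (hg : Summable fun n => |g n|) :
    Summable fun n => |convZ f g n| :=
  .of_nonneg_of_le (fun _ => abs_nonneg _) (abs_convZ_le hf hg)
    (summable_abs_convKernel hf hg).prod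

lemma tvNorm_convZ_le (hf : Summable fun n => |f n|) (hg : Summable fun n => |g n|) :
    tvNorm (convZ f g) ≤ tvNorm f * tvNorm g := by
  have hK := summable_abs_convKernel hf hg
  calc tvNorm (convZ f g) ≤ ∑' n, ∑' k, |f k * g (n - k)| :=
        (summable_abs_convZ hf hg).tsum_le_tsum (abs_convZ_le hf hg) hK.prod
    _ = ∑' p : ℤ × ℤ, |f (convKernelEquiv p).1| * |g (convKernelEquiv p).2| := by
        rw [← hK.tsum_prod]
        simp [convKernelEquiv, abs_mul]
    _ = tvNorm f * tvNorm g := by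
        rw [convKernelEquiv.tsum_eq (fun q => |f q.1| * |g q.2|), tvNorm, tvNorm,
          tsum_mul_tsum_of_summable_norm (by simpa using hf) (by simpa using hg)]

lemma summable_abs_convPow (hf : Summable fun n => |f n|) (j : ℕ) :
    Summable fun n => |convPow f j n| := by
  induction j with
  | zero => exact summable_of_ne_finset_zero (s := {0}) fun n hn => by simp_all [convPow]
  | succ j ih => exact summable_abs_convZ hf ih

lemma tvNorm_convPow_le (hf : Summable fun n => |f n|) (j : ℕ) :
    tvNorm (convPow f j) ≤ tvNorm f ^ j := by
  induction j with
  | zero => simp [tvNorm, convPow, apply_ite]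
  | succ j ih =>
    calc tvNorm (convPow f (j + 1)) ≤ tvNorm f * tvNorm (convPow f j) :=
          tvNorm_convZ_le hf (summable_abs_convPow hf j)
      _ ≤ tvNorm f * tvNorm f ^ j :=
          mul_le_mul_of_nonneg_left ih (tsum_nonneg fun _ => abs_nonneg _)
      _ = tvNorm f ^ (j + 1) := (pow_succ' _ _).symm

end Convolution

section Difference

variable {f g : ℤ → ℝ}

def diffZ (f : ℤ → ℝ) : ℤ → ℝ := fun n => f (n - 1) - f n

lemma convZ_comm (f g : ℤ → ℝ) : convZ f g = convZ g f := by
  funext n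
  rw [convZ, ← (Equiv.subLeft n).tsum_eq]
  simp [convZ, mul_comm]

lemma convZ_Umeas (g : ℤ → ℝ) : convZ Umeas g = diffZ g := by
  funext n
  rw [convZ, tsum_eq_sum (s := {0, 1}) fun k hk => by simp_all [Umeas]]
  simp [Umeas, diffZ]
  ring

lemma summable_abs_Umeas : Summable fun n => |Umeas n| :=
  summable_of_ne_finset_zero (s := {0, 1}) fun n hn => by simp_all [Umeas]

lemma summable_abs_diffZ (hf : Summable fun n => |f n|) : Summable fun n => |diffZ f n| := by
  have hshift : Summable fun n => |f (n - 1)| :=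
    (Equiv.subRight (1 : ℤ)).summable_iff.mpr hf
  exact .of_nonneg_of_le (fun _ => abs_nonneg _) (fun n => abs_sub _ _) (hshift.add hf)

lemma summable_abs_diffZ_iterate (hf : Summable fun n => |f n|) (j : ℕ) :
    Summable fun n => |diffZ^[j] f n| := by
  induction j with
  | zero => exact hf
  | succ j ih => rw [Function.iterate_succ_apply']; exact summable_abs_diffZ ih

lemma convZ_diffZ_right (hf : Summable fun n => |f n|) (hg : Summable fun n => |g n|) :
    convZ f (diffZ g) = diffZ (convZ f g) := by
  funext n
  rw [diffZ, convZ, convZ, convZ, ← (summable_convZ_apply hf hg (n - 1)).tsum_sub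
    (summable_convZ_apply hf hg n)]
  congr 1 with k
  rw [diffZ, sub_right_comm, mul_sub]

lemma convZ_diffZ_left (hf : Summable fun n => |f n|) (hg : Summable fun n => |g n|) :
    convZ (diffZ f) g = diffZ (convZ f g) := by
  rw [convZ_comm, convZ_diffZ_right hg hf, convZ_comm]

lemma convZ_diffZ_iterate_right (hf : Summable fun n => |f n|) (hg : Summable fun n => |g n|)
    (j : ℕ) : convZ f (diffZ^[j] g) = diffZ^[j] (convZ f g) := by
  induction j with
  | zero => rfl
  | succ j ih =>
    rw [Function.iterate_succ_apply', Function.iterate_succ_apply',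
      convZ_diffZ_right hf (summable_abs_diffZ_iterate hg j), ih]

lemma convZ_convPow_Umeas (hg : Summable fun n => |g n|) (j : ℕ) :
    convZ (convPow Umeas j) g = diffZ^[j] g := by
  induction j with
  | zero =>
    funext n
    rw [convZ, tsum_eq_single 0 fun k hk => by simp [convPow, hk]]
    simp [convPow]
  | succ j ih =>
    rw [convPow, convZ_Umeas, convZ_diffZ_left (summable_abs_convPow summable_abs_Umeas j) hg,
      ih, Function.iterate_succ_apply']

lemma convPow_diffZ (hf : Summable fun n => |f n|) (j : ℕ) :
    convPow (diffZ f) j = diffZ^[j] (convPow f j) := by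
  induction j with
  | zero => rfl
  | succ j ih =>
    have hfj := summable_abs_convPow hf j
    rw [convPow, ih, convZ_diffZ_left hf (summable_abs_diffZ_iterate hfj j),
      convZ_diffZ_iterate_right hf hfj, ← Function.iterate_succ_apply' diffZ, convPow]

end Difference

lemma tsum_int_eq_tsum_nat {α : Type*} [AddCommMonoid α] [TopologicalSpace α] {f : ℤ → α}
    (hf : ∀ n < 0, f n = 0) : ∑' n, f n = ∑' k : ℕ, f k :=
  (Nat.cast_injective.tsum_eq fun n hn => ⟨n.toNat, Int.toNat_of_nonneg
    (not_lt.mp fun h => hn (hf n h))⟩).symm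

noncomputable def poissonZ (s : ℝ) : ℤ → ℝ :=
  fun n => if 0 ≤ n then exp (-s) * s ^ n.toNat / n.toNat ! else 0

lemma poissonZ_of_neg (s : ℝ) {n : ℤ} (hn : n < 0) : poissonZ s n = 0 :=
  if_neg (not_le.mpr hn)

lemma poissonZ_natCast (s : ℝ) (k : ℕ) : poissonZ s k = exp (-s) * s ^ k / k ! := by
  simp [poissonZ]

lemma poissonZ_nonneg {s : ℝ} (hs : 0 ≤ s) (n : ℤ) : 0 ≤ poissonZ s n := by
  unfold poissonZ; split_ifs <;> positivity

lemma summable_abs_poissonZ {s : ℝ} (hs : 0 ≤ s) : Summable fun n => |poissonZ s n| := by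
  simp_rw [abs_of_nonneg (poissonZ_nonneg hs _)]
  refine (Nat.cast_injective.summable_iff fun n hn => ?_).mp ?_
  · exact poissonZ_of_neg s (not_le.mp fun h => hn ⟨n.toNat, Int.toNat_of_nonneg h⟩)
  · simpa [Function.comp_def, poissonZ_natCast, mul_div_assoc] using
      (Real.summable_pow_div_factorial s).mul_left (exp (-s))

lemma convZ_poissonZ (a b : ℝ) : convZ (poissonZ a) (poissonZ b) = poissonZ (a + b) := by
  funext n
  rcases lt_or_ge n 0 with hn | hn
  · rw [poissonZ_of_neg _ hn, convZ]
    refine (tsum_congr fun k => ?_).trans tsum_zero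
    rcases lt_or_ge k 0 with hk | hk
    · rw [poissonZ_of_neg a hk, zero_mul]
    · rw [poissonZ_of_neg b (by omega), mul_zero]
  · lift n to ℕ using hn
    rw [convZ, tsum_int_eq_tsum_nat fun k hk => by rw [poissonZ_of_neg a hk, zero_mul],
      tsum_eq_sum (s := Finset.range (n + 1)) fun k hk => by
        rw [poissonZ_of_neg b (by rw [Finset.mem_range] at hk; omega), mul_zero],
      poissonZ_natCast, add_pow, Finset.mul_sum, Finset.sum_div]
    refine Finset.sum_congr rfl fun k hk => ?_
    have hkn : k ≤ n := Nat.lt_succ_iff.mp (Finset.mem_range.mp hk)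
    rw [← Nat.cast_sub hkn, poissonZ_natCast, poissonZ_natCast, Nat.cast_choose ℝ hkn,
      neg_add, exp_add]
    field_simp

lemma convPow_poissonZ (s : ℝ) (j : ℕ) : convPow (poissonZ s) j = poissonZ (j * s) := by
  induction j with
  | zero =>
    funext n
    rcases lt_trichotomy n 0 with hn | rfl | hn
    · simp [convPow, poissonZ_of_neg _ hn, hn.ne]
    · simp [convPow, poissonZ]
    · lift n to ℕ using hn.le
      have : n ≠ 0 := by omega
      simp [convPow, poissonZ_natCast, this]
  | succ j ih =>
    rw [convPow, ih, convZ_poissonZ]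
    push_cast
    ring_nf

lemma convPow_Umeas_of_neg (j : ℕ) {n : ℤ} (hn : n < 0) : convPow Umeas j n = 0 := by
  induction j generalizing n with
  | zero => simp [convPow, hn.ne]
  | succ j ih => rw [convPow, convZ_Umeas, diffZ, ih (by omega), ih hn, sub_zero]

lemma convPow_Umeas_natCast (j k : ℕ) :
    convPow Umeas j k = (-1) ^ (j + k) * j.choose k := by
  induction j generalizing k with
  | zero =>
    cases k with
    | zero => simp [convPow]
    | succ k => simp [convPow, Nat.cast_add_one_ne_zero]
  | succ j ih =>
    rw [convPow, convZ_Umeas, diffZ]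
    cases k with
    | zero =>
      have h0 := ih 0
      push_cast at h0
      simp [convPow_Umeas_of_neg, h0, pow_succ]
    | succ k =>
      rw [Nat.cast_add_one, add_sub_cancel_right, ih, ← Nat.cast_add_one, ih,
        Nat.choose_succ_succ']
      push_cast
      ring

lemma convPow_const_mul (c : ℝ) (f : ℤ → ℝ) (j : ℕ) :
    convPow (fun n => c * f n) j = fun n => c ^ j * convPow f j n := by
  induction j with
  | zero => simp [convPow]
  | succ j ih =>
    funext n
    simp only [convPow, convZ, ih, ← tsum_mul_left]
    congr 1 with k
    ring

lemma convExp_const_mul_Umeas (t : ℝ) : convExp (fun n => t * Umeas n) = poissonZ t := by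
  funext n
  rcases lt_or_ge n 0 with hn | hn
  · simp [convExp, convPow_const_mul, convPow_Umeas_of_neg _ hn, poissonZ_of_neg t hn]
  lift n to ℕ using hn
  set a : ℕ → ℝ := fun j => t ^ j * ((-1) ^ (j + n) * j.choose n) / j ! with ha
  have hshift : HasSum (fun i => a (i + n)) (t ^ n / n ! * exp (-t)) := by
    have h : HasSum (fun i => t ^ n / n ! * ((-t) ^ i / i !)) (t ^ n / n ! * exp (-t)) := by
      simpa only [← Real.exp_eq_exp_ℝ] using
        (NormedSpace.expSeries_div_hasSum_exp (-t)).mul_left (t ^ n / n !)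
    convert h using 1
    funext i
    have hsign : (-1 : ℝ) ^ (i + n + n) = (-1) ^ i := by
      rw [add_assoc, pow_add, Even.neg_one_pow ⟨n, rfl⟩, mul_one]
    simp only [ha]
    rw [hsign, Nat.cast_choose ℝ (Nat.le_add_left n i), Nat.add_sub_cancel, neg_pow]
    field_simp
    ring
  have hhead : ∑ i ∈ Finset.range n, a i = 0 :=
    Finset.sum_eq_zero fun i hi => by simp [ha, Nat.choose_eq_zero_of_lt (Finset.mem_range.mp hi)]
  have hsum := (hasSum_nat_add_iff n).mp hshift
  rw [hhead, add_zero] at hsum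
  simp only [convExp, convPow_const_mul, convPow_Umeas_natCast, ← ha, hsum.tsum_eq,
    poissonZ_natCast]
  ring

lemma tsum_abs_sub_succ_of_unimodal {q : ℕ → ℝ} (hq : Summable q) {m : ℕ}
    (hup : ∀ k < m, q k ≤ q (k + 1)) (hdown : ∀ k, m ≤ k → q (k + 1) ≤ q k) :
    ∑' k, |q k - q (k + 1)| = 2 * q m - q 0 := by
  have hq1 : Summable fun k => q (k + 1) := (summable_nat_add_iff 1).mpr hq
  have hhead : ∑ k ∈ Finset.range m, |q k - q (k + 1)| = q m - q 0 := by
    rw [← Finset.sum_range_sub]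
    refine Finset.sum_congr rfl fun k hk => ?_
    rw [abs_sub_comm, abs_of_nonneg (sub_nonneg.mpr (hup k (Finset.mem_range.mp hk)))]
  have htail : ∑' i, |q (i + m) - q (i + m + 1)| = q m := by
    have hqm : Summable fun i => q (i + m) := (summable_nat_add_iff m).mpr hq
    have hqm1 : Summable fun i => q (i + m + 1) := (summable_nat_add_iff (m + 1)).mpr hq
    rw [tsum_congr fun i => abs_of_nonneg (sub_nonneg.mpr (hdown (i + m) (Nat.le_add_left m i))),
      hqm.tsum_sub hqm1, hqm.tsum_eq_zero_add]
    simp [add_right_comm]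
  rw [← ((hq.sub hq1).abs).sum_add_tsum_nat_add m, hhead, htail]
  ring

lemma poissonZ_succ (s : ℝ) (k : ℕ) :
    poissonZ s (k + 1 : ℕ) = s / (k + 1) * poissonZ s k := by
  rw [poissonZ_natCast, poissonZ_natCast, Nat.factorial_succ]
  push_cast
  field_simp
  ring

lemma tvNorm_diffZ_poissonZ {s : ℝ} (hs : 0 ≤ s) :
    tvNorm (diffZ (poissonZ s)) = 2 * poissonZ s ⌊s⌋₊ := by
  set q : ℕ → ℝ := fun k => poissonZ s k with hq
  have hqs : Summable q := by
    simpa [hq, poissonZ_natCast, mul_div_assoc] using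
      (Real.summable_pow_div_factorial s).mul_left (exp (-s))
  have hratio (k : ℕ) : q (k + 1) = s / (k + 1) * q k := poissonZ_succ s k
  have hup (k : ℕ) (hk : k < ⌊s⌋₊) : q k ≤ q (k + 1) := by
    have : (k + 1 : ℝ) ≤ s := by exact_mod_cast (Nat.le_floor_iff hs).mp hk
    rw [hratio]
    exact le_mul_of_one_le_left (poissonZ_nonneg hs k) ((one_le_div (by positivity)).mpr this)
  have hdown (k : ℕ) (hk : ⌊s⌋₊ ≤ k) : q (k + 1) ≤ q k := by
    have : s ≤ k + 1 :=
      (Nat.lt_floor_add_one s).le.trans (by exact_mod_cast Nat.add_le_add_right hk 1)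
    rw [hratio]
    exact mul_le_of_le_one_left (poissonZ_nonneg hs k) ((div_le_one (by positivity)).mpr this)
  have hsum : Summable fun k : ℕ => |diffZ (poissonZ s) k| :=
    (summable_abs_diffZ (summable_abs_poissonZ hs)).comp_injective Nat.cast_injective
  rw [tvNorm, tsum_int_eq_tsum_nat fun n hn => by
      rw [diffZ, poissonZ_of_neg s hn, poissonZ_of_neg s (by omega), sub_zero, abs_zero],
    hsum.tsum_eq_zero_add]
  simp only [diffZ, Nat.cast_zero, zero_sub, poissonZ_of_neg s (by norm_num : (-1 : ℤ) < 0),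
    Nat.cast_add_one, add_sub_cancel_right]
  have htv := tsum_abs_sub_succ_of_unimodal hqs hup hdown
  simp only [hq, Nat.cast_add_one, Nat.cast_zero] at htv
  rw [htv, abs_neg, abs_of_nonneg (poissonZ_nonneg hs 0)]
  ring

lemma pow_mul_exp_neg_le {x : ℝ} (hx : 0 ≤ x) (a : ℕ) :
    x ^ a * exp (-x) ≤ (a / exp 1) ^ a := by
  rcases a.eq_zero_or_pos with rfl | ha
  · simpa using hx
  have ha' : (0 : ℝ) < a := by exact_mod_cast ha
  have hbase : x / a ≤ exp (x / a - 1) := by linarith [add_one_le_exp (x / a - 1)]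
  have hpow : (x / a) ^ a ≤ exp (x - a) := by
    calc (x / a) ^ a ≤ exp (x / a - 1) ^ a := by gcongr
      _ = exp (x - a) := by rw [← exp_nat_mul]; congr 1; field_simp
  calc x ^ a * exp (-x) = a ^ a * (x / a) ^ a * exp (-x) := by
        rw [← mul_pow, mul_div_cancel₀ x ha'.ne']
    _ ≤ a ^ a * exp (x - a) * exp (-x) := by gcongr
    _ = (a / exp 1) ^ a := by
      rw [mul_assoc, ← exp_add, div_pow, ← exp_nat_mul, div_eq_mul_inv, ← exp_neg]
      ring_nf

lemma two_mul_add_one_pow_le_sq_factorial (m : ℕ) :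
    ((2 * m + 1 : ℝ)) ^ (2 * m + 1) ≤ (2 ^ m * m ! * exp 1 ^ m) ^ 2 := by
  have he : (2.7 : ℝ) ≤ exp 1 := by linarith [exp_one_gt_d9]
  rcases lt_or_ge m 4 with hm | hm
  · calc _ ≤ (2 ^ m * m ! * 2.7 ^ m : ℝ) ^ 2 := by
          interval_cases m <;> norm_num [Nat.factorial]
      _ ≤ _ := by gcongr
  have hn : (0 : ℝ) < 2 * m := by positivity
  have hcompound : (2 * m + 1 : ℝ) ^ (2 * m) ≤ (2 * m) ^ (2 * m) * exp 1 := by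
    have h := one_add_inv_pow_le_exp (n := 2 * m)
    push_cast at h
    calc (2 * m + 1 : ℝ) ^ (2 * m) = (2 * m) ^ (2 * m) * (1 + (2 * m : ℝ)⁻¹) ^ (2 * m) := by
          rw [← mul_pow, mul_add, mul_inv_cancel₀ hn.ne', mul_one]
      _ ≤ _ := by gcongr
  have hlin : (2 * m + 1) * exp 1 ≤ π * (2 * m) := by
    have : (4 : ℝ) ≤ m := by exact_mod_cast hm
    nlinarith [exp_one_lt_d9, pi_gt_d2]
  have hstirling : 2 * π * m * (2 * m) ^ (2 * m) ≤ (2 ^ m * m ! * exp 1 ^ m) ^ 2 := by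
    calc 2 * π * m * (2 * m) ^ (2 * m)
        = (2 ^ m * (√(2 * π * m) * (m / exp 1) ^ m) * exp 1 ^ m) ^ 2 := by
          rw [mul_pow, mul_pow, mul_pow, mul_pow, sq_sqrt (by positivity), div_pow]
          field_simp
          ring
      _ ≤ _ := by gcongr; exact Stirling.le_factorial_stirling m
  calc (2 * m + 1 : ℝ) ^ (2 * m + 1) = (2 * m + 1) * (2 * m + 1) ^ (2 * m) := pow_succ' _ _
    _ ≤ (2 * m + 1) * ((2 * m) ^ (2 * m) * exp 1) := by gcongr
    _ = (2 * m + 1) * exp 1 * (2 * m) ^ (2 * m) := by ring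
    _ ≤ π * (2 * m) * (2 * m) ^ (2 * m) := by gcongr
    _ = 2 * π * m * (2 * m) ^ (2 * m) := by ring
    _ ≤ _ := hstirling

lemma two_mul_poissonZ_le {s : ℝ} (hs : 0 < s) (m : ℕ) :
    2 * poissonZ s m ≤ √(2 / (s * exp 1)) := by
  set X := exp 1 * (2 * s) ^ (2 * m + 1) * exp (-(2 * s)) * exp 1 ^ (2 * m) with hX_def
  have hX : X ≤ (2 ^ m * m ! * exp 1 ^ m) ^ 2 := by
    have h := pow_mul_exp_neg_le (by positivity : 0 ≤ 2 * s) (2 * m + 1)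
    calc X = exp 1 * ((2 * s) ^ (2 * m + 1) * exp (-(2 * s))) * exp 1 ^ (2 * m) := by ring
      _ ≤ exp 1 * ((2 * m + 1 : ℕ) / exp 1) ^ (2 * m + 1) * exp 1 ^ (2 * m) := by gcongr
      _ = (2 * m + 1 : ℝ) ^ (2 * m + 1) := by
          rw [div_pow]; field_simp; push_cast; ring
      _ ≤ _ := two_mul_add_one_pow_le_sq_factorial m
  have hsq : (2 * poissonZ s m) ^ 2 = 2 / (s * exp 1) * (X / (2 ^ m * m ! * exp 1 ^ m) ^ 2) := by
    have he2 : exp (-(2 * s)) = exp (-s) ^ 2 := by rw [← exp_nat_mul]; ring_nf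
    rw [poissonZ_natCast, hX_def, he2]
    field_simp
    ring
  rw [Real.le_sqrt (mul_nonneg zero_le_two (poissonZ_nonneg hs.le m)) (by positivity), hsq]
  exact mul_le_of_le_one_right (by positivity) (div_le_one_of_le₀ hX (by positivity))

/-- ‖U^j e^{tU}‖ ≤ (2j/(te))^{j/2}. -/
theorem tv_Uj_convExp_le (t : ℝ) (ht : 0 < t) (j : ℕ) (hj : 1 ≤ j) :
    tvNorm (convZ (convPow Umeas j) (convExp (fun n => t * Umeas n)))
      ≤ ((2 * j) / (t * Real.exp 1)) ^ ((j : ℝ) / 2) := by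
  have hj' : (0 : ℝ) < j := by exact_mod_cast hj
  set s := t / j with hs_def
  have hs : 0 < s := div_pos ht hj'
  have hπ := summable_abs_poissonZ hs.le
  have hsplit : poissonZ t = convPow (poissonZ s) j := by
    rw [convPow_poissonZ, hs_def, mul_div_cancel₀ t hj'.ne']
  calc tvNorm (convZ (convPow Umeas j) (convExp (fun n => t * Umeas n)))
      = tvNorm (convPow (diffZ (poissonZ s)) j) := by
        rw [convExp_const_mul_Umeas, convZ_convPow_Umeas (summable_abs_poissonZ ht.le), hsplit,
          convPow_diffZ hπ]
    _ ≤ tvNorm (diffZ (poissonZ s)) ^ j := tvNorm_convPow_le (summable_abs_diffZ hπ) j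
    _ ≤ √(2 / (s * exp 1)) ^ j := by
        rw [tvNorm_diffZ_poissonZ hs.le]
        exact pow_le_pow_left₀ (mul_nonneg zero_le_two (poissonZ_nonneg hs.le _))
          (two_mul_poissonZ_le hs _) j
    _ = (2 * j / (t * exp 1)) ^ ((j : ℝ) / 2) := by
        rw [Real.rpow_div_two_eq_sqrt _ (by positivity), Real.rpow_natCast, hs_def]
        congr 2
        field_simp
end

section
/- Let U = δ_1 − δ_0, 0 < p < 1, and n, j positive integers. Then ‖U^j (δ_0 + pU)^n‖ ≤ C(n+j, j)^{-1/2} (p(1-p))^{-j/2}, where C(n+j,j) is the binomial coefficient and (δ_0 + pU)^n is the Binomial(n,p) distribution (as convolution power). -/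
open Real

/-- The Bernoulli(p) distribution `δ_0 + pU` on ℤ. -/
noncomputable def bernoulliZ (p : ℝ) : ℤ → ℝ :=
  fun n => if n = 0 then 1 - p else if n = 1 then p else 0

/-!
With `q = 1 - p` and `N = n + j`, the measure is the coefficient sequence of
`G = (X - 1)^j (pX + q)^(N - j)`. Cauchy–Schwarz against the Binomial(N, p) weights `w_k` bounds
its total variation by the square root of the χ²-sum `∑ G_k² / w_k`, which is exactly
`(pq)^{-j} / C(N, j)`. To evaluate it, the symmetry
`C(N, j) G_k = C(N, k) [Y^j] (Y + p)^k (q - Y)^(N - k)` (both sides are one coefficient of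
`(pX + q + Y (X - 1))^N`) turns the χ²-sum into `∑_k G_k [Y^j] (Y/p + 1)^k (1 - Y/q)^(N - k)`,
divided by `C(N, j)`. That sum is the homogenization of `G` evaluated at `(Y/p + 1, 1 - Y/q)`,
namely `((1/p + 1/q) Y)^j (p + q)^(N - j)`.
-/

open Polynomial
open scoped LaurentPolynomial

theorem convZ_coeff_mul (f g : ℝ[T;T⁻¹]) : convZ ⇑f.coeff ⇑g.coeff = ⇑(f * g).coeff := by
  ext n
  rw [AddMonoidAlgebra.coeff_mul_apply_left, convZ, tsum_eq_sum (s := f.coeff.support),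
    Finsupp.sum]
  · simp only [neg_add_eq_sub]
  · intro k hk
    rw [Finsupp.notMem_support_iff.mp hk, zero_mul]

theorem convPow_coeff_pow (f : ℝ[T;T⁻¹]) (j : ℕ) :
    convPow ⇑f.coeff j = ⇑(f ^ j).coeff := by
  induction j with
  | zero => ext n; simp [convPow, ← LaurentPolynomial.T_zero, LaurentPolynomial.T_apply, eq_comm]
  | succ j ih => rw [convPow, ih, convZ_coeff_mul, pow_succ']

theorem coeff_toLaurent_natCast {R : Type*} [Semiring R] (P : R[X]) (k : ℕ) :
    (toLaurent P).coeff (k : ℤ) = P.coeff k := by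
  rw [LaurentPolynomial.coeff_toLaurent]
  exact (Finsupp.mapDomain_apply Nat.castEmbedding.injective _ k).trans (toFinsupp_apply P k)

theorem tvNorm_toLaurent {P : ℝ[X]} {N : ℕ} (hP : P.natDegree ≤ N) :
    tvNorm ⇑(toLaurent P).coeff = ∑ k ∈ Finset.range (N + 1), |P.coeff k| := by
  rw [tvNorm, tsum_eq_sum (s := (Finset.range (N + 1)).map Nat.castEmbedding), Finset.sum_map]
  · simp only [Nat.castEmbedding_apply, coeff_toLaurent_natCast]
  · intro k hk
    have : k ∉ (toLaurent P).coeff.support := by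
      rw [LaurentPolynomial.support_coeff_toLaurent]
      exact fun h => hk (Finset.map_subset_map.2 (supp_subset_range_natDegree_succ.trans
        (Finset.range_subset_range.2 (by omega))) h)
    rw [Finsupp.notMem_support_iff.mp this, abs_zero]

theorem Umeas_eq_coeff_toLaurent : Umeas = ⇑(toLaurent (X - 1 : ℝ[X])).coeff := by
  ext n
  simp only [Umeas, map_sub, toLaurent_X, map_one, ← LaurentPolynomial.T_zero,
    AddMonoidAlgebra.coeff_sub, Finsupp.sub_apply, LaurentPolynomial.T_apply]
  split_ifs <;> first | omega | norm_num

theorem bernoulliZ_eq_coeff_toLaurent (p : ℝ) :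
    bernoulliZ p = ⇑(toLaurent (C p * X + C (1 - p))).coeff := by
  ext n
  simp only [bernoulliZ, map_add, map_mul, toLaurent_X, toLaurent_C, AddMonoidAlgebra.coeff_add,
    Finsupp.add_apply, ← LaurentPolynomial.single_eq_C_mul_T, LaurentPolynomial.C_apply,
    AddMonoidAlgebra.coeff_single, Finsupp.single_apply]
  split_ifs <;> first | omega | norm_num

theorem coeff_sum_range_C_mul_X_pow {R : Type*} [Semiring R] (a : ℕ → R) {N j : ℕ}
    (hj : j ≤ N) : (∑ m ∈ Finset.range (N + 1), C (a m) * X ^ m).coeff j = a j := by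
  simp only [finsetSum_coeff, coeff_C_mul_X_pow]
  rw [Finset.sum_ite_eq, if_pos (Finset.mem_range.2 (Nat.lt_succ_of_le hj))]

theorem choose_mul_coeff_eq_choose_mul_coeff {R : Type*} [CommRing R] (p q : R) {N j k : ℕ}
    (hj : j ≤ N) (hk : k ≤ N) :
    (N.choose j : R) * ((X - 1) ^ j * (C p * X + C q) ^ (N - j)).coeff k
      = (N.choose k : R) * ((X + C p) ^ k * (C q - X) ^ (N - k)).coeff j := by
  -- both sides are the coefficient of `Y^j X^k` in `F`, with `Y` the outer variable
  obtain ⟨F, hF⟩ : ∃ F : R[X][X], F = (X * C (X - 1) + C (C p * X + C q)) ^ N := ⟨_, rfl⟩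
  have expand_in_Y :
      F.coeff j = (N.choose j : R[X]) * ((X - 1) ^ j * (C p * X + C q) ^ (N - j)) := by
    have : F = ∑ m ∈ Finset.range (N + 1),
        C ((N.choose m : R[X]) * ((X - 1) ^ m * (C p * X + C q) ^ (N - m))) * X ^ m := by
      rw [hF, add_pow]
      refine Finset.sum_congr rfl fun m _ => ?_
      simp only [map_mul, map_pow, map_natCast]
      ring
    rw [this, coeff_sum_range_C_mul_X_pow _ hj]
  have expand_in_X : F.coeff j = ∑ m ∈ Finset.range (N + 1),
      C ((N.choose m : R) * ((X + C p) ^ m * (C q - X) ^ (N - m)).coeff j) * X ^ m := by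
    have : F = (C X * (X + C (C p)) + (C (C q) - X)) ^ N := by
      simp only [hF, map_add, map_mul, map_sub, map_one]
      ring
    rw [this, add_pow, finsetSum_coeff]
    refine Finset.sum_congr rfl fun m _ => ?_
    have : (C X * (X + C (C p))) ^ m * (C (C q) - X) ^ (N - m) * (N.choose m : R[X][X])
        = C (X ^ m * N.choose m) * ((X + C p) ^ m * (C q - X) ^ (N - m)).map C := by
      rw [mul_pow]
      simp only [Polynomial.map_mul, Polynomial.map_pow, Polynomial.map_add, Polynomial.map_sub,
        map_X, Polynomial.map_C, map_mul, map_pow, map_natCast]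
      ring
    rw [this, coeff_C_mul, coeff_map, map_mul, map_natCast]
    ring
  have := congrArg (coeff · k) (expand_in_Y.symm.trans expand_in_X)
  simpa only [coeff_natCast_mul, coeff_sum_range_C_mul_X_pow _ hk] using this

section Homogenize

variable {R A : Type*} [CommSemiring R] [CommSemiring A] [Algebra R A]

theorem aeval_homogenize (P : R[X]) (N : ℕ) (x y : A) :
    MvPolynomial.aeval ![x, y] (P.homogenize N)
      = ∑ k ∈ Finset.range (N + 1), algebraMap R A (P.coeff k) * x ^ k * y ^ (N - k) := by
  rw [homogenize, map_sum, Finset.Nat.sum_antidiagonal_eq_sum_range_succ_mk]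
  refine Finset.sum_congr rfl fun k _ => ?_
  simp [MvPolynomial.aeval_monomial, Finsupp.prod_fintype, Fin.prod_univ_two, mul_assoc]

theorem homogenize_pow {P : R[X]} {d : ℕ} (hP : P.natDegree ≤ d) (m : ℕ) :
    (P ^ m).homogenize (m * d) = P.homogenize d ^ m := by
  induction m with
  | zero => simp
  | succ m ih =>
    rw [pow_succ, pow_succ, add_mul, one_mul,
      homogenize_mul _ _ (natDegree_pow_le_of_le m hP) hP, ih]

end Homogenize

section ChiSquare

variable {K : Type*} [Field K] {p q : K}

theorem sum_coeff_mul_coeff_eq_inv_add_inv_pow (hp : p ≠ 0) (hq : q ≠ 0) {N j : ℕ}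
    (hj : j ≤ N) :
    ∑ k ∈ Finset.range (N + 1), ((X - 1) ^ j * (C p * X + C q) ^ (N - j)).coeff k
        * ((C p⁻¹ * X + 1) ^ k * (1 - C q⁻¹ * X) ^ (N - k)).coeff j
      = (p⁻¹ + q⁻¹) ^ j * (p + q) ^ (N - j) := by
  set G : K[X] := (X - 1) ^ j * (C p * X + C q) ^ (N - j)
  set x : K[X] := C p⁻¹ * X + 1
  set y : K[X] := 1 - C q⁻¹ * X
  have hdeg : (X - 1 : K[X]).natDegree ≤ 1 := by compute_degree!
  have hG : G.homogenize N = (MvPolynomial.X 0 - MvPolynomial.X 1) ^ j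
      * (MvPolynomial.C p * MvPolynomial.X 0 + MvPolynomial.C q * MvPolynomial.X 1) ^ (N - j) := by
    have h := homogenize_mul _ _ (natDegree_pow_le_of_le j hdeg)
      (natDegree_pow_le_of_le (N - j) (natDegree_linear_le (a := p) (b := q)))
    rw [show j * 1 + (N - j) * 1 = N by omega] at h
    rw [h, homogenize_pow hdeg, homogenize_pow natDegree_linear_le]
    simp [sub_eq_add_neg]
  have hdiff : x - y = C (p⁻¹ + q⁻¹) * X := by
    simp only [x, y, map_add]
    ring
  have hsum : C p * x + C q * y = C (p + q) := by
    calc C p * x + C q * y = C (p * p⁻¹) * X - C (q * q⁻¹) * X + C (p + q) := by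
          simp only [x, y, map_mul, map_add]
          ring
      _ = C (p + q) := by rw [mul_inv_cancel₀ hp, mul_inv_cancel₀ hq]; ring
  calc ∑ k ∈ Finset.range (N + 1), G.coeff k * (x ^ k * y ^ (N - k)).coeff j
      = (MvPolynomial.aeval ![x, y] (G.homogenize N)).coeff j := by
        simp [aeval_homogenize, finsetSum_coeff, mul_assoc, coeff_C_mul]
    _ = ((x - y) ^ j * (C p * x + C q * y) ^ (N - j)).coeff j := by simp [hG]
    _ = (C ((p⁻¹ + q⁻¹) ^ j * (p + q) ^ (N - j)) * X ^ j).coeff j := by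
        rw [hdiff, hsum]
        simp only [map_mul, map_pow]
        ring_nf
    _ = (p⁻¹ + q⁻¹) ^ j * (p + q) ^ (N - j) := by rw [coeff_C_mul_X_pow, if_pos rfl]

theorem coeff_X_add_C_pow_mul_C_sub_X_pow (hp : p ≠ 0) (hq : q ≠ 0) (k m j : ℕ) :
    ((X + C p) ^ k * (C q - X) ^ m).coeff j
      = p ^ k * q ^ m * ((C p⁻¹ * X + 1) ^ k * (1 - C q⁻¹ * X) ^ m).coeff j := by
  have h1 : (X + C p : K[X]) = C p * (C p⁻¹ * X + 1) := by
    rw [mul_add, ← mul_assoc, ← map_mul, mul_inv_cancel₀ hp, map_one, one_mul, mul_one]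
  have h2 : (C q - X : K[X]) = C q * (1 - C q⁻¹ * X) := by
    rw [mul_sub, ← mul_assoc, ← map_mul, mul_inv_cancel₀ hq, map_one, one_mul, mul_one]
  rw [h1, h2, mul_pow, mul_pow, mul_mul_mul_comm, ← map_pow, ← map_pow, ← map_mul,
    coeff_C_mul]

theorem sum_sq_coeff_div_binomial_eq [CharZero K] (hp : p ≠ 0) (hq : q ≠ 0) {N j : ℕ}
    (hj : j ≤ N) :
    ∑ k ∈ Finset.range (N + 1), ((X - 1) ^ j * (C p * X + C q) ^ (N - j)).coeff k ^ 2
        / (N.choose k * p ^ k * q ^ (N - k))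
      = (p⁻¹ + q⁻¹) ^ j * (p + q) ^ (N - j) / N.choose j := by
  rw [← sum_coeff_mul_coeff_eq_inv_add_inv_pow hp hq hj, Finset.sum_div]
  refine Finset.sum_congr rfl fun k hk => ?_
  have hk : k ≤ N := Nat.lt_succ_iff.1 (Finset.mem_range.1 hk)
  have hsymm := choose_mul_coeff_eq_choose_mul_coeff p q hj hk
  rw [coeff_X_add_C_pow_mul_C_sub_X_pow hp hq] at hsymm
  have hCj : (N.choose j : K) ≠ 0 := Nat.cast_ne_zero.2 (Nat.choose_pos hj).ne'
  have hCk : (N.choose k : K) ≠ 0 := Nat.cast_ne_zero.2 (Nat.choose_pos hk).ne'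
  generalize ((X - 1) ^ j * (C p * X + C q) ^ (N - j)).coeff k = g at hsymm ⊢
  generalize ((C p⁻¹ * X + 1) ^ k * (1 - C q⁻¹ * X) ^ (N - k)).coeff j = l at hsymm ⊢
  field_simp
  linear_combination g * hsymm

end ChiSquare

theorem sum_abs_le_sqrt_sum_sq_div {ι : Type*} (s : Finset ι) (c : ι → ℝ) {w : ι → ℝ}
    (hw : ∀ i ∈ s, 0 < w i) (hw_sum : ∑ i ∈ s, w i = 1) :
    ∑ i ∈ s, |c i| ≤ √(∑ i ∈ s, c i ^ 2 / w i) := by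
  rw [Real.le_sqrt (Finset.sum_nonneg fun i _ => abs_nonneg _)
    (Finset.sum_nonneg fun i hi => div_nonneg (sq_nonneg _) (hw i hi).le)]
  simpa [hw_sum, sq_abs] using Finset.sq_sum_div_le_sum_sq_div s (fun i => |c i|) hw

theorem sqrt_inv_pow_div_eq_rpow {x c : ℝ} (hx : 0 < x) (hc : 0 ≤ c) (j : ℕ) :
    √(x⁻¹ ^ j / c) = c ^ (-(1 : ℝ) / 2) * x ^ (-(j : ℝ) / 2) := by
  rw [Real.sqrt_eq_rpow, Real.div_rpow (by positivity) hc, inv_pow, Real.inv_rpow (by positivity),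
    ← Real.rpow_natCast, ← Real.rpow_mul hx.le, div_eq_mul_inv, mul_comm, neg_div, neg_div,
    Real.rpow_neg hc, Real.rpow_neg hx.le]
  ring_nf

theorem tv_Uj_binomial_le_general (p : ℝ) (hp : 0 < p) (hp1 : p < 1) (n j : ℕ) :
    tvNorm (convZ (convPow Umeas j) (convPow (bernoulliZ p) n))
      ≤ (((n + j).choose j : ℝ)) ^ (-(1 : ℝ) / 2) * (p * (1 - p)) ^ (-(j : ℝ) / 2) := by
  set q := 1 - p
  have hq : 0 < q := sub_pos.2 hp1
  set N := n + j
  set G : ℝ[X] := (X - 1) ^ j * (C p * X + C q) ^ (N - j)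
  have hconv : convZ (convPow Umeas j) (convPow (bernoulliZ p) n) = ⇑(toLaurent G).coeff := by
    rw [Umeas_eq_coeff_toLaurent, bernoulliZ_eq_coeff_toLaurent, convPow_coeff_pow,
      convPow_coeff_pow, convZ_coeff_mul, ← map_pow, ← map_pow, ← map_mul,
      show n = N - j by omega]
  have hdeg : G.natDegree ≤ N := by
    have h1 : (X - 1 : ℝ[X]).natDegree ≤ 1 := by compute_degree!
    refine natDegree_mul_le.trans ?_
    have := natDegree_pow_le_of_le j h1
    have := natDegree_pow_le_of_le (N - j) (natDegree_linear_le (a := p) (b := q))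
    omega
  have hweights : ∑ k ∈ Finset.range (N + 1), (N.choose k * p ^ k * q ^ (N - k) : ℝ) = 1 := by
    have h := add_pow p q N
    rw [add_sub_cancel, one_pow] at h
    rw [h]
    exact Finset.sum_congr rfl fun k _ => by ring
  rw [hconv, tvNorm_toLaurent hdeg]
  calc ∑ k ∈ Finset.range (N + 1), |G.coeff k|
      ≤ √(∑ k ∈ Finset.range (N + 1), G.coeff k ^ 2 / (N.choose k * p ^ k * q ^ (N - k))) :=
        sum_abs_le_sqrt_sum_sq_div _ _ (fun k hk => by
          have := Nat.choose_pos (Nat.lt_succ_iff.1 (Finset.mem_range.1 hk))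
          positivity) hweights
    _ = √((p * q)⁻¹ ^ j / N.choose j) := by
        rw [sum_sq_coeff_div_binomial_eq hp.ne' hq.ne' (by omega), inv_add_inv hp.ne' hq.ne',
          add_sub_cancel, one_pow, mul_one, one_div]
    _ = _ := sqrt_inv_pow_div_eq_rpow (by positivity) (Nat.cast_nonneg _) j

/-- ‖U^j (δ_0 + pU)^n‖ ≤ C(n+j,j)^{-1/2} (p(1-p))^{-j/2}. -/
theorem tv_Uj_binomial_le (p : ℝ) (hp : 0 < p) (hp1 : p < 1) (n j : ℕ)
    (hn : 1 ≤ n) (hj : 1 ≤ j) :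
    tvNorm (convZ (convPow Umeas j) (convPow (bernoulliZ p) n))
      ≤ (((n + j).choose j : ℝ)) ^ (-(1 : ℝ) / 2) * (p * (1 - p)) ^ (-(j : ℝ) / 2) :=
  tv_Uj_binomial_le_general p hp hp1 n j
end

section
/- Let X_1, X_2 be indicator random variables obtained by grouping m consecutive (k_1,k_2)-event indicators as in the construction of N(n;k_1,k_2), so that X_1, X_2 are Bernoulli(m·a(p)) and the product X_1 X_2 counts overlapping occurrence pairs. Then E[X_1 X_2] = a(p)² m(m+1)/2 and hence Ê(X_1, X_2) = E[X_1 X_2] − E X_1 · E X_2 = −a(p)² m(m−1)/2. -/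
/-!
Write `Y_j = ∏_{Z_j} (1 - η) · ∏_{O_j} η`, where `Z_j` and `O_j` are the positions of the `k₁`
zeros and the `k₂` ones of the run ending at `j`. For independent `η` with mean `p`, the mean of
such a product over disjoint index sets `Z`, `O` is `(1 - p)^|Z| p^|O|`; this gives `E Y_j = a` and,
when the windows of `i` and `j` are disjoint, `E[Y_i Y_j] = a²`. When the windows overlap
(`i < j < i + m`), some position lies in `O_i ∩ Z_j`, so `Y_i Y_j = 0`. Writing
`X₁ X₂ = ∑_{i,j < m} Y_{m+i} Y_{2m+j}`, the pair `(i, j)` contributes `a²` exactly when `i ≤ j`,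
which happens for `m(m+1)/2` pairs.
-/

open MeasureTheory ProbabilityTheory Finset

section Independence

variable {Ω ι : Type*} [MeasurableSpace Ω] {μ : Measure Ω}

theorem ProbabilityTheory.iIndepFun.integral_finset_prod_comp {X : ι → Ω → ℝ}
    (hX : iIndepFun X μ) (mX : ∀ i, Measurable (X i)) {F : ι → ℝ → ℝ}
    (hF : ∀ i, Measurable (F i)) (S : Finset ι) :
    ∫ ω, ∏ i ∈ S, F i (X i ω) ∂μ = ∏ i ∈ S, ∫ ω, F i (X i ω) ∂μ := by
  simp only [← Finset.prod_coe_sort S]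
  exact (hX.precomp Subtype.val_injective).integral_fun_prod_comp
    (fun i => (mX i).aemeasurable) fun i => (hF i).aestronglyMeasurable

theorem ProbabilityTheory.iIndepFun.integral_prod_one_sub_mul_prod [IsProbabilityMeasure μ]
    {X : ι → Ω → ℝ} (hX : iIndepFun X μ) (mX : ∀ i, Measurable (X i))
    (hint : ∀ i, Integrable (X i) μ) {p : ℝ} (hmean : ∀ i, ∫ ω, X i ω ∂μ = p)
    {A B : Finset ι} (hAB : Disjoint A B) :
    ∫ ω, (∏ i ∈ A, (1 - X i ω)) * ∏ i ∈ B, X i ω ∂μ = (1 - p) ^ #A * p ^ #B := by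
  classical
  set F : ι → ℝ → ℝ := fun i x => if i ∈ A then 1 - x else x
  have hF : ∀ i, Measurable (F i) := fun i => by
    by_cases hi : i ∈ A <;> simp only [F, hi, if_true, if_false] <;> fun_prop
  have hsplit : ∀ g : ι → ℝ, ∏ i ∈ A ∪ B, F i (g i) = (∏ i ∈ A, (1 - g i)) * ∏ i ∈ B, g i :=
    fun g => by
      rw [prod_union hAB]
      congr 1
      · exact prod_congr rfl fun i hi => if_pos hi
      · exact prod_congr rfl fun i hi => if_neg (disjoint_right.mp hAB hi)
  have hint_F : ∀ i, ∫ ω, F i (X i ω) ∂μ = if i ∈ A then 1 - p else p := fun i => by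
    by_cases hi : i ∈ A
    · simp only [F, hi, if_true, integral_sub (integrable_const 1) (hint i), hmean,
        integral_const, probReal_univ, smul_eq_mul, one_mul]
    · simp only [F, hi, if_false, hmean]
  calc ∫ ω, (∏ i ∈ A, (1 - X i ω)) * ∏ i ∈ B, X i ω ∂μ
      = ∫ ω, ∏ i ∈ A ∪ B, F i (X i ω) ∂μ := by simp only [hsplit]
    _ = (1 - p) ^ #A * p ^ #B := by
      rw [hX.integral_finset_prod_comp mX hF, ← prod_const, ← prod_const]
      simp only [hint_F]
      exact hsplit fun _ => p

end Independence

theorem integral_eq_measureReal_of_zero_or_one {Ω : Type*} [MeasurableSpace Ω] {μ : Measure Ω}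
    {f : Ω → ℝ} (hf : Measurable f) (h01 : ∀ ω, f ω = 0 ∨ f ω = 1) :
    ∫ ω, f ω ∂μ = μ.real {ω | f ω = 1} := by
  have hs : MeasurableSet {ω | f ω = 1} := hf (measurableSet_singleton 1)
  have hind : {ω | f ω = 1}.indicator 1 = f := funext fun ω => by
    rcases h01 ω with h | h <;> simp [Set.indicator, h]
  rw [← integral_indicator_one hs, hind]

theorem sum_range_sum_range_ite_le (c : ℝ) (m : ℕ) :
    ∑ i ∈ range m, ∑ j ∈ range m, (if i ≤ j then c else 0) = c * (m * (m + 1) / 2) := by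
  induction m with
  | zero => simp
  | succ m ih =>
    have hlast : ∀ i ∈ range m, (if i ≤ m then c else 0) = c := fun i hi =>
      if_pos (mem_range.mp hi).le
    have hfirst : ∀ j ∈ range m, (if m ≤ j then c else 0) = 0 := fun j hj =>
      if_neg (not_le.mpr (mem_range.mp hj))
    simp only [sum_range_succ, sum_add_distrib, ih, sum_congr rfl hlast, sum_congr rfl hfirst,
      sum_const_zero, sum_const, card_range, nsmul_eq_mul, le_refl, if_true, Nat.cast_succ]
    ring

theorem Finset.sum_Icc_sub_one_eq_sum_range {M : Type*} [AddCommMonoid M] (f : ℕ → M) {a b : ℕ}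
    (hab : a < b) : ∑ j ∈ Icc a (b - 1), f j = ∑ i ∈ range (b - a), f (a + i) := by
  rw [← sum_Ico_eq_sum_range, Icc_sub_one_right_eq_Ico_of_not_isMin (by simp; omega)]

section Runs

variable {Ω : Type*} (k₁ k₂ : ℕ)

def zeroBlock (j : ℕ) : Finset ℕ := Icc (j - (k₁ + k₂) + 1) (j - k₂)

def oneBlock (j : ℕ) : Finset ℕ := Icc (j - k₂ + 1) j

/-- For `j ≥ k₁ + k₂` this is the paper's `Y_j`; for smaller `j` the truncated subtraction in
`zeroBlock` and `oneBlock` makes the blocks shorter. -/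
def runIndicator (η : ℕ → Ω → ℝ) (j : ℕ) (ω : Ω) : ℝ :=
  (∏ i ∈ zeroBlock k₁ k₂ j, (1 - η i ω)) * ∏ i ∈ oneBlock k₂ j, η i ω

variable {k₁ k₂}

theorem card_zeroBlock {j : ℕ} (hj : k₁ + k₂ ≤ j) : #(zeroBlock k₁ k₂ j) = k₁ := by
  simp only [zeroBlock, Nat.card_Icc]; omega

theorem card_oneBlock {j : ℕ} (hj : k₂ ≤ j) : #(oneBlock k₂ j) = k₂ := by
  simp only [oneBlock, Nat.card_Icc]; omega

theorem disjoint_zeroBlock_oneBlock {i j : ℕ} (hij : i ≤ j ∨ j + (k₁ + k₂) ≤ i) :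
    Disjoint (zeroBlock k₁ k₂ i) (oneBlock k₂ j) := by
  simp only [zeroBlock, oneBlock, disjoint_left, mem_Icc]; omega

theorem disjoint_zeroBlock_zeroBlock {i j : ℕ} (hij : i + (k₁ + k₂) ≤ j) :
    Disjoint (zeroBlock k₁ k₂ i) (zeroBlock k₁ k₂ j) := by
  simp only [zeroBlock, disjoint_left, mem_Icc]; omega

theorem disjoint_oneBlock_oneBlock {i j : ℕ} (hij : i + k₂ ≤ j) :
    Disjoint (oneBlock k₂ i) (oneBlock k₂ j) := by
  simp only [oneBlock, disjoint_left, mem_Icc]; omega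

theorem exists_mem_oneBlock_mem_zeroBlock (hk₁ : 1 ≤ k₁) (hk₂ : 1 ≤ k₂) {i j : ℕ} (hi : k₂ ≤ i)
    (hij : i < j) (hji : j < i + (k₁ + k₂)) : ∃ t ∈ oneBlock k₂ i, t ∈ zeroBlock k₁ k₂ j :=
  ⟨min i (j - k₂), by simp only [zeroBlock, oneBlock, mem_Icc]; omega⟩

variable {η : ℕ → Ω → ℝ}

theorem runIndicator_mul_eq_zero (h01 : ∀ i ω, η i ω = 0 ∨ η i ω = 1) (hk₁ : 1 ≤ k₁)
    (hk₂ : 1 ≤ k₂) {i j : ℕ} (hi : k₂ ≤ i) (hij : i < j) (hji : j < i + (k₁ + k₂)) (ω : Ω) :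
    runIndicator k₁ k₂ η i ω * runIndicator k₁ k₂ η j ω = 0 := by
  obtain ⟨t, hti, htj⟩ := exists_mem_oneBlock_mem_zeroBlock hk₁ hk₂ hi hij hji
  rcases h01 t ω with h | h
  · have : ∏ i ∈ oneBlock k₂ i, η i ω = 0 := prod_eq_zero hti h
    simp only [runIndicator, this, mul_zero, zero_mul]
  · have : ∏ i ∈ zeroBlock k₁ k₂ j, (1 - η i ω) = 0 := prod_eq_zero htj (by rw [h, sub_self])
    simp only [runIndicator, this, mul_zero, zero_mul]

theorem abs_runIndicator_le_one (h01 : ∀ i ω, η i ω = 0 ∨ η i ω = 1) (j : ℕ) (ω : Ω) :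
    |runIndicator k₁ k₂ η j ω| ≤ 1 := by
  have hprod : ∀ (S : Finset ℕ) (g : ℕ → ℝ), (∀ i, |g i| ≤ 1) → |∏ i ∈ S, g i| ≤ 1 :=
    fun S g hg => by
      rw [abs_prod]
      exact prod_le_one (fun i _ => abs_nonneg _) fun i _ => hg i
  rw [runIndicator, abs_mul]
  refine mul_le_one₀ (hprod _ _ fun i => ?_) (abs_nonneg _) (hprod _ _ fun i => ?_) <;>
    rcases h01 i ω with h | h <;> simp [h]

theorem measurable_runIndicator [MeasurableSpace Ω] (hmeas : ∀ i, Measurable (η i)) (j : ℕ) :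
    Measurable (runIndicator k₁ k₂ η j) :=
  (Finset.measurable_prod _ fun i _ => measurable_const.sub (hmeas i)).mul
    (Finset.measurable_prod _ fun i _ => hmeas i)

end Runs

section Moments

variable {Ω : Type*} [MeasurableSpace Ω] {μ : Measure Ω} [IsProbabilityMeasure μ] {k₁ k₂ : ℕ}
  {η : ℕ → Ω → ℝ} {p : ℝ}

theorem integrable_runIndicator (hmeas : ∀ i, Measurable (η i))
    (h01 : ∀ i ω, η i ω = 0 ∨ η i ω = 1) (j : ℕ) : Integrable (runIndicator k₁ k₂ η j) μ :=
  .of_bound (measurable_runIndicator hmeas j).aestronglyMeasurable 1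
    (.of_forall (abs_runIndicator_le_one h01 j))

theorem integrable_runIndicator_mul (hmeas : ∀ i, Measurable (η i))
    (h01 : ∀ i ω, η i ω = 0 ∨ η i ω = 1) (i j : ℕ) :
    Integrable (fun ω => runIndicator k₁ k₂ η i ω * runIndicator k₁ k₂ η j ω) μ :=
  .of_bound
    ((measurable_runIndicator hmeas i).mul (measurable_runIndicator hmeas j)).aestronglyMeasurable 1
    (.of_forall fun ω => by
      rw [Real.norm_eq_abs, abs_mul]
      exact mul_le_one₀ (abs_runIndicator_le_one h01 i ω) (abs_nonneg _)
        (abs_runIndicator_le_one h01 j ω))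

theorem integral_runIndicator (hind : iIndepFun η μ) (hmeas : ∀ i, Measurable (η i))
    (hint : ∀ i, Integrable (η i) μ) (hmean : ∀ i, ∫ ω, η i ω ∂μ = p) {j : ℕ}
    (hj : k₁ + k₂ ≤ j) :
    ∫ ω, runIndicator k₁ k₂ η j ω ∂μ = (1 - p) ^ k₁ * p ^ k₂ := by
  unfold runIndicator
  rw [hind.integral_prod_one_sub_mul_prod hmeas hint hmean
    (disjoint_zeroBlock_oneBlock (Or.inl le_rfl)), card_zeroBlock hj, card_oneBlock (by omega)]

theorem integral_runIndicator_mul (hind : iIndepFun η μ) (hmeas : ∀ i, Measurable (η i))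
    (hint : ∀ i, Integrable (η i) μ) (hmean : ∀ i, ∫ ω, η i ω ∂μ = p) {i j : ℕ}
    (hi : k₁ + k₂ ≤ i) (hij : i + (k₁ + k₂) ≤ j) :
    ∫ ω, runIndicator k₁ k₂ η i ω * runIndicator k₁ k₂ η j ω ∂μ
      = ((1 - p) ^ k₁ * p ^ k₂) ^ 2 := by
  have hZ := disjoint_zeroBlock_zeroBlock hij
  have hO := disjoint_oneBlock_oneBlock (k₂ := k₂) (show i + k₂ ≤ j by omega)
  have hZO : Disjoint (zeroBlock k₁ k₂ i ∪ zeroBlock k₁ k₂ j) (oneBlock k₂ i ∪ oneBlock k₂ j) := by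
    simp only [disjoint_union_left, disjoint_union_right]
    refine ⟨⟨?_, ?_⟩, ?_, ?_⟩ <;> exact disjoint_zeroBlock_oneBlock (by omega)
  have hmerge : ∀ ω, runIndicator k₁ k₂ η i ω * runIndicator k₁ k₂ η j ω
      = (∏ t ∈ zeroBlock k₁ k₂ i ∪ zeroBlock k₁ k₂ j, (1 - η t ω)) *
          ∏ t ∈ oneBlock k₂ i ∪ oneBlock k₂ j, η t ω := fun ω => by
    rw [prod_union hZ, prod_union hO, runIndicator, runIndicator]
    ring
  simp only [hmerge, hind.integral_prod_one_sub_mul_prod hmeas hint hmean hZO,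
    card_union_of_disjoint hZ, card_union_of_disjoint hO, card_zeroBlock hi,
    card_zeroBlock (show k₁ + k₂ ≤ j by omega), card_oneBlock (show k₂ ≤ i by omega),
    card_oneBlock (show k₂ ≤ j by omega)]
  ring

theorem integral_sum_runIndicator (hind : iIndepFun η μ) (hmeas : ∀ i, Measurable (η i))
    (h01 : ∀ i ω, η i ω = 0 ∨ η i ω = 1) (hint : ∀ i, Integrable (η i) μ)
    (hmean : ∀ i, ∫ ω, η i ω ∂μ = p) {a : ℕ} (ha : k₁ + k₂ ≤ a) (n : ℕ) :
    ∫ ω, ∑ i ∈ range n, runIndicator k₁ k₂ η (a + i) ω ∂μ = n * ((1 - p) ^ k₁ * p ^ k₂) := by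
  rw [integral_finsetSum _ fun i _ => integrable_runIndicator hmeas h01 _,
    sum_congr rfl fun i _ => integral_runIndicator hind hmeas hint hmean (by omega),
    sum_const, card_range, nsmul_eq_mul]

theorem integral_sum_runIndicator_mul_sum (hind : iIndepFun η μ) (hmeas : ∀ i, Measurable (η i))
    (h01 : ∀ i ω, η i ω = 0 ∨ η i ω = 1) (hint : ∀ i, Integrable (η i) μ)
    (hmean : ∀ i, ∫ ω, η i ω ∂μ = p) (hk₁ : 1 ≤ k₁) (hk₂ : 1 ≤ k₂) {a : ℕ} (ha : k₁ + k₂ ≤ a) :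
    ∫ ω, (∑ i ∈ range (k₁ + k₂), runIndicator k₁ k₂ η (a + i) ω) *
        ∑ j ∈ range (k₁ + k₂), runIndicator k₁ k₂ η (a + (k₁ + k₂) + j) ω ∂μ
      = ((1 - p) ^ k₁ * p ^ k₂) ^ 2 * ((k₁ + k₂ : ℕ) * ((k₁ + k₂ : ℕ) + 1) / 2) := by
  have hpair : ∀ i ∈ range (k₁ + k₂), ∀ j ∈ range (k₁ + k₂),
      ∫ ω, runIndicator k₁ k₂ η (a + i) ω * runIndicator k₁ k₂ η (a + (k₁ + k₂) + j) ω ∂μ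
        = if i ≤ j then ((1 - p) ^ k₁ * p ^ k₂) ^ 2 else 0 := fun i hi j _ => by
    rw [mem_range] at hi
    split_ifs with hij
    · exact integral_runIndicator_mul hind hmeas hint hmean (by omega) (by omega)
    · have hvanish := runIndicator_mul_eq_zero h01 hk₁ hk₂ (i := a + i)
        (j := a + (k₁ + k₂) + j) (by omega) (by omega) (by omega)
      simp only [hvanish, integral_zero]
  simp only [sum_mul_sum]
  rw [integral_finsetSum _ fun i _ => integrable_finsetSum _ fun j _ =>
    integrable_runIndicator_mul hmeas h01 _ _]
  simp only [integral_finsetSum _ fun j _ => integrable_runIndicator_mul hmeas h01 _ _]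
  rw [sum_congr rfl fun i hi => sum_congr rfl (hpair i hi)]
  exact sum_range_sum_range_ite_le _ _

end Moments

theorem grouped_k1k2_mixed_moment_general {Ω : Type*} [MeasurableSpace Ω] (μ : Measure Ω)
    [IsProbabilityMeasure μ] (p : ℝ) (hp : 0 < p)
    (k₁ k₂ : ℕ) (hk₁ : 1 ≤ k₁) (hk₂ : 1 ≤ k₂)
    (η : ℕ → Ω → ℝ) (hmeas : ∀ i, Measurable (η i))
    (h01 : ∀ i ω, η i ω = 0 ∨ η i ω = 1)
    (hber : ∀ i, μ {ω | η i ω = 1} = ENNReal.ofReal p)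
    (hind : iIndepFun η μ)
    (Y : ℕ → Ω → ℝ)
    (hY : ∀ j ω, Y j ω =
      (∏ i ∈ Finset.Icc (j - (k₁ + k₂) + 1) (j - k₂), (1 - η i ω)) *
        ∏ i ∈ Finset.Icc (j - k₂ + 1) j, η i ω)
    (X₁ X₂ : Ω → ℝ)
    (hX₁ : ∀ ω, X₁ ω = ∑ j ∈ Finset.Icc (k₁ + k₂) (2 * (k₁ + k₂) - 1), Y j ω)
    (hX₂ : ∀ ω, X₂ ω = ∑ j ∈ Finset.Icc (2 * (k₁ + k₂)) (3 * (k₁ + k₂) - 1), Y j ω) :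
    (∫ ω, X₁ ω * X₂ ω ∂μ)
        = ((1 - p) ^ k₁ * p ^ k₂) ^ 2 * ((k₁ + k₂) * ((k₁ + k₂) + 1)) / 2 ∧
      (∫ ω, X₁ ω * X₂ ω ∂μ) - (∫ ω, X₁ ω ∂μ) * ∫ ω, X₂ ω ∂μ
        = -(((1 - p) ^ k₁ * p ^ k₂) ^ 2 * ((k₁ + k₂) * ((k₁ + k₂) - 1)) / 2) := by
  obtain rfl : Y = runIndicator k₁ k₂ η := funext₂ hY
  have hint : ∀ i, Integrable (η i) μ := fun i =>
    .of_bound (hmeas i).aestronglyMeasurable 1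
      (.of_forall fun ω => by rcases h01 i ω with h | h <;> simp [h])
  have hmean : ∀ i, ∫ ω, η i ω ∂μ = p := fun i => by
    rw [integral_eq_measureReal_of_zero_or_one (hmeas i) (h01 i), measureReal_def, hber,
      ENNReal.toReal_ofReal hp.le]
  set m := k₁ + k₂
  obtain rfl : X₁ = fun ω => ∑ i ∈ range m, runIndicator k₁ k₂ η (m + i) ω := funext fun ω => by
    rw [hX₁, sum_Icc_sub_one_eq_sum_range _ (by omega), show 2 * m - m = m by omega]
  obtain rfl : X₂ = fun ω => ∑ i ∈ range m, runIndicator k₁ k₂ η (m + m + i) ω :=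
    funext fun ω => by
      rw [hX₂, sum_Icc_sub_one_eq_sum_range _ (by omega), show 3 * m - 2 * m = m by omega,
        two_mul]
  rw [integral_sum_runIndicator_mul_sum hind hmeas h01 hint hmean hk₁ hk₂ le_rfl,
    integral_sum_runIndicator hind hmeas h01 hint hmean le_rfl,
    integral_sum_runIndicator hind hmeas h01 hint hmean (by omega)]
  push_cast [m]
  constructor <;> ring

/-- Mixed moment of two consecutive grouped indicators in the (k₁,k₂)-events
construction: E[X₁X₂] = a(p)²m(m+1)/2 and Ê(X₁,X₂) = −a(p)²m(m−1)/2,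
where m = k₁+k₂, a(p) = (1−p)^{k₁}p^{k₂},
X₁ = Y_m + … + Y_{2m−1} and X₂ = Y_{2m} + … + Y_{3m−1}. -/
theorem grouped_k1k2_mixed_moment {Ω : Type*} [MeasurableSpace Ω] (μ : Measure Ω)
    [IsProbabilityMeasure μ] (p : ℝ) (hp : 0 < p) (hp1 : p < 1)
    (k₁ k₂ : ℕ) (hk₁ : 1 ≤ k₁) (hk₂ : 1 ≤ k₂)
    (η : ℕ → Ω → ℝ) (hmeas : ∀ i, Measurable (η i))
    (h01 : ∀ i ω, η i ω = 0 ∨ η i ω = 1)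
    (hber : ∀ i, μ {ω | η i ω = 1} = ENNReal.ofReal p)
    (hind : iIndepFun η μ)
    (Y : ℕ → Ω → ℝ)
    (hY : ∀ j ω, Y j ω =
      (∏ i ∈ Finset.Icc (j - (k₁ + k₂) + 1) (j - k₂), (1 - η i ω)) *
        ∏ i ∈ Finset.Icc (j - k₂ + 1) j, η i ω)
    (X₁ X₂ : Ω → ℝ)
    (hX₁ : ∀ ω, X₁ ω = ∑ j ∈ Finset.Icc (k₁ + k₂) (2 * (k₁ + k₂) - 1), Y j ω)
    (hX₂ : ∀ ω, X₂ ω = ∑ j ∈ Finset.Icc (2 * (k₁ + k₂)) (3 * (k₁ + k₂) - 1), Y j ω) :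
    (∫ ω, X₁ ω * X₂ ω ∂μ)
        = ((1 - p) ^ k₁ * p ^ k₂) ^ 2 * ((k₁ + k₂) * ((k₁ + k₂) + 1)) / 2 ∧
      (∫ ω, X₁ ω * X₂ ω ∂μ) - (∫ ω, X₁ ω ∂μ) * ∫ ω, X₂ ω ∂μ
        = -(((1 - p) ^ k₁ * p ^ k₂) ^ 2 * ((k₁ + k₂) * ((k₁ + k₂) - 1)) / 2) :=
  grouped_k1k2_mixed_moment_general μ p hp k₁ k₂ hk₁ hk₂ η hmeas h01 hber hind Y hY X₁ X₂ hX₁ hX₂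
end
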